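/- arXiv:0711.1161 — 10 statements merged into one kernel-verified Lean document; each statement's English description precedes it below -/
import Mathlib

section
/- Let M_t ≥ 1, M_r ≥ 1 be integers, M_* = min(M_t, M_r), b > 0 real, and let d* : [0, M_*] → ℝ be the piecewise-linear function connecting the points (k, (M_t − k)(M_r − k)) for k = 0, 1, …, M_*. For each n ≥ 1 define Δ_n = sup over all t ∈ ℝ^n with t_i ≥ 0 and Σ_{i=1}^n t_i = 1 and all r ∈ ℝ^n with 0 ≤ r_1 ≤ ⋯ ≤ r_n ≤ M_*, of min_{0 ≤ k ≤ n} { d*(r_{k+1}) + b·Σ_{i=1}^k t_i r_i } (where d*(r_{n+1}) is interpreted as 0), and define Δ̂_n identically except with t fixed to the equal allocation t_i = 1/n for all i. Then the sequence (Δ_n) is nondecreasing and bounded above by d*(0) = M_t·M_r (hence convergent), and lim_{n→∞} Δ̂_n = lim_{n→∞} Δ_n. -/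
/-!
Padding an `n`-layer scheme with a layer that gets no channel and the top rate `M` cannot lower
its exponent, and every exponent is at most `d*(r₀) ≤ Mt Mr`, so `Δ` increases to a limit.
Conversely, an `m`-layer allocation `t` is emulated with `n` equal slots: rounding the cumulative
allocations up to multiples of `1 / n`, slot `j` takes the rate of the last layer whose rounded
start is at most `j`. Each layer loses at most one slot, so every partial rate sum drops by at most
`m M / n`, whence `Δ̂ n ≥ Δ m - b m M / n`. Letting `n → ∞` and then `m → ∞` squeezes `Δ̂ n`
between `Δ m - o(1)` and `Δ n`.
-/

open Filter Finset

theorem sub_sub_one_le_natCeil_sub_natCeil {x y : ℝ} (hx : 0 ≤ x) (hxy : x ≤ y) :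
    y - x - 1 ≤ ((⌈y⌉₊ - ⌈x⌉₊ : ℕ) : ℝ) := by
  rw [Nat.cast_sub (Nat.ceil_mono hxy)]
  linarith [Nat.le_ceil y, Nat.ceil_lt_add_one hx]

theorem sum_range_comp_findGreatest {A : Type*} [AddCommMonoid A] {N : ℕ → ℕ} (hN : Monotone N)
    (hN0 : N 0 = 0) (f : ℕ → A) {i m : ℕ} (him : i ≤ m) :
    ∑ j ∈ range (N i), f (Nat.findGreatest (fun l => N l ≤ j) m) =
      ∑ l ∈ range i, (N (l + 1) - N l) • f l := by
  induction i with
  | zero => simp [hN0]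
  | succ i ih =>
    rw [sum_range_succ, ← ih (by omega), ← sum_range_add_sum_Ico _ (hN i.le_succ),
      ← Nat.card_Ico, ← sum_const]
    congr 1
    refine sum_congr rfl fun j hj => ?_
    rw [mem_Ico] at hj
    rw [(Nat.findGreatest_eq_iff (P := fun l => N l ≤ j)).2
      ⟨by omega, fun _ => hj.1, fun l hil _ hl => ?_⟩]
    have := hN (show i + 1 ≤ l by omega)
    omega

theorem exists_nat_mem_Icc_of_le {x : ℝ} {N : ℕ} (hN : 0 < N) (hx0 : 0 ≤ x) (hxN : x ≤ N) :
    ∃ k < N, x ∈ Set.Icc (k : ℝ) (k + 1) := by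
  rcases hxN.lt_or_eq with hx | rfl
  · exact ⟨⌊x⌋₊, (Nat.floor_lt hx0).2 hx, Nat.floor_le hx0, (Nat.lt_floor_add_one x).le⟩
  · exact ⟨N - 1, Nat.sub_lt hN one_pos, by simp [Nat.cast_pred hN], by simp [Nat.cast_pred hN]⟩

theorem exists_tendsto_of_sub_div_le {u w : ℕ → ℝ} {D : ℝ}
    (hmono : ∀ n, 0 < n → u n ≤ u (n + 1)) (hD : ∀ n, 0 < n → u n ≤ D)
    (hwu : ∀ n, 0 < n → w n ≤ u n) (hlow : ∀ m, 0 < m → ∃ C, ∀ n, 0 < n → u m - C / n ≤ w n) :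
    ∃ l, Tendsto u atTop (nhds l) ∧ Tendsto w atTop (nhds l) := by
  have hbdd : BddAbove (Set.range fun n => u (n + 1)) :=
    ⟨D, by rintro _ ⟨n, rfl⟩; exact hD _ n.succ_pos⟩
  set l := ⨆ n, u (n + 1)
  have hul : ∀ n, 0 < n → u n ≤ l := fun n hn => by
    simpa [Nat.sub_add_cancel hn] using le_ciSup hbdd (n - 1)
  have hu : Tendsto u atTop (nhds l) := (tendsto_add_atTop_iff_nat 1).1 <|
    tendsto_atTop_ciSup (monotone_nat_of_le_succ fun n => hmono _ n.succ_pos) hbdd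
  refine ⟨l, hu, tendsto_order.2 ⟨fun a ha => ?_, fun a ha => ?_⟩⟩
  · obtain ⟨m, ham, hm⟩ := ((hu.eventually (lt_mem_nhds ha)).and (eventually_gt_atTop 0)).exists
    obtain ⟨C, hC⟩ := hlow m hm
    have hlim : Tendsto (fun n : ℕ => u m - C / n) atTop (nhds (u m)) := by
      simpa using tendsto_const_nhds.sub (tendsto_const_div_atTop_nhds_zero_nat C)
    filter_upwards [hlim.eventually (lt_mem_nhds ham), eventually_gt_atTop 0] with n hn hn0
    exact hn.trans_le (hC n hn0)
  · filter_upwards [eventually_gt_atTop 0] with n hn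
    exact ((hwu n hn).trans (hul n hn)).trans_lt ha

namespace LayeredSource

noncomputable section

variable (b : ℝ) (dstar : ℝ → ℝ)

/-- The term `k < n` is the exponent of the event that layer `k` is in outage while the first `k`
layers are decoded; the term `k = n` is that of all layers being decoded. -/
def value (n : ℕ) (t r : ℕ → ℝ) : ℝ :=
  (range (n + 1)).inf' nonempty_range_add_one fun k =>
    if k = n then b * ∑ i ∈ range n, t i * r i
    else dstar (r k) + b * ∑ i ∈ range k, t i * r i

def IsAllocation (n : ℕ) (t : ℕ → ℝ) : Prop :=
  (∀ i, 0 ≤ t i) ∧ ∑ i ∈ range n, t i = 1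

def IsRateProfile (M : ℝ) (n : ℕ) (r : ℕ → ℝ) : Prop :=
  0 ≤ r 0 ∧ (∀ i j, i ≤ j → j < n → r i ≤ r j) ∧ ∀ i < n, r i ≤ M

def exponents (M : ℝ) (n : ℕ) : Set ℝ :=
  {v | ∃ t r, IsAllocation n t ∧ IsRateProfile M n r ∧ v = value b dstar n t r}

def equalExponents (M : ℝ) (n : ℕ) : Set ℝ :=
  {v | ∃ r, IsRateProfile M n r ∧ v = value b dstar n (fun _ => 1 / (n : ℝ)) r}

def optimalExponent (M : ℝ) (n : ℕ) : ℝ := sSup (exponents b dstar M n)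

def equalExponent (M : ℝ) (n : ℕ) : ℝ := sSup (equalExponents b dstar M n)

variable {b dstar} {M : ℝ} {m n : ℕ} {t r : ℕ → ℝ}

theorem IsRateProfile.nonneg (hr : IsRateProfile M n r) {i : ℕ} (hi : i < n) : 0 ≤ r i :=
  hr.1.trans (hr.2.1 0 i i.zero_le hi)

theorem IsRateProfile.le_bound (hr : IsRateProfile M n r) {i : ℕ} (hi : i < n) : r i ≤ M :=
  hr.2.2 i hi

theorem IsRateProfile.bound_nonneg (hr : IsRateProfile M n r) (hn : 0 < n) : 0 ≤ M :=
  (hr.nonneg hn).trans (hr.le_bound hn)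

theorem le_value_iff {c : ℝ} :
    c ≤ value b dstar n t r ↔
      (∀ k < n, c ≤ dstar (r k) + b * ∑ i ∈ range k, t i * r i) ∧
        c ≤ b * ∑ i ∈ range n, t i * r i := by
  simp only [value, le_inf'_iff, mem_range]
  refine ⟨fun h => ⟨fun k hk => ?_, by simpa using h n n.lt_succ_self⟩, fun ⟨h, hn⟩ k hk => ?_⟩
  · simpa [hk.ne] using h k (by omega)
  · split_ifs with hkn
    · exact hn
    · exact h k (by omega)

theorem value_le_of_lt {k : ℕ} (hk : k < n) :
    value b dstar n t r ≤ dstar (r k) + b * ∑ i ∈ range k, t i * r i :=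
  (le_value_iff.1 le_rfl).1 k hk

theorem value_le_sum : value b dstar n t r ≤ b * ∑ i ∈ range n, t i * r i :=
  (le_value_iff.1 le_rfl).2

theorem value_le_of_forall_le {D : ℝ} (hD : ∀ x ∈ Set.Icc 0 M, dstar x ≤ D)
    (hr : IsRateProfile M n r) (hn : 0 < n) : value b dstar n t r ≤ D := by
  calc value b dstar n t r ≤ dstar (r 0) + b * ∑ i ∈ range 0, t i * r i := value_le_of_lt hn
    _ = dstar (r 0) := by simp
    _ ≤ D := hD _ ⟨hr.nonneg hn, hr.le_bound hn⟩

theorem IsAllocation.update_zero (ht : IsAllocation n t) :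
    IsAllocation (n + 1) (Function.update t n 0) := by
  refine ⟨fun i => ?_, ?_⟩
  · rcases eq_or_ne i n with rfl | h
    · simp
    · simpa [h] using ht.1 i
  · rw [sum_range_succ, ← ht.2,
      sum_congr rfl fun i hi => Function.update_of_ne (mem_range.1 hi).ne _ _]
    simp

theorem IsRateProfile.update_bound (hr : IsRateProfile M n r) (hn : 0 < n) :
    IsRateProfile M (n + 1) (Function.update r n M) := by
  have hr' : ∀ i < n, Function.update r n M i = r i := fun i hi => Function.update_of_ne hi.ne _ _
  refine ⟨?_, fun i j hij hj => ?_, fun i hi => ?_⟩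
  · rw [hr' 0 hn]
    exact hr.1
  · rcases (Nat.lt_succ_iff.1 hj).lt_or_eq with hjn | rfl
    · rw [hr' i (by omega), hr' j hjn]
      exact hr.2.1 i j hij hjn
    · rcases hij.lt_or_eq with hin | rfl
      · simpa [hr' i hin] using hr.le_bound hin
      · rfl
  · rcases (Nat.lt_succ_iff.1 hi).lt_or_eq with hin | rfl
    · simpa [hr' i hin] using hr.le_bound hin
    · simp

theorem value_le_value_update (hd0 : ∀ x ∈ Set.Icc 0 M, 0 ≤ dstar x) (hn : 0 < n)
    (hr : IsRateProfile M n r) :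
    value b dstar n t r ≤
      value b dstar (n + 1) (Function.update t n 0) (Function.update r n M) := by
  set t' := Function.update t n 0
  set r' := Function.update r n M
  have hr' : ∀ i < n, r' i = r i := fun i hi => Function.update_of_ne hi.ne _ _
  have hsum : ∀ k ≤ n, ∑ i ∈ range k, t' i * r' i = ∑ i ∈ range k, t i * r i :=
    fun k hk => sum_congr rfl fun i hi => by
      have hin : i < n := (mem_range.1 hi).trans_le hk
      rw [hr' i hin, show t' i = t i from Function.update_of_ne hin.ne _ _]
  refine le_value_iff.2 ⟨fun k hk => ?_, ?_⟩
  · rcases (Nat.lt_succ_iff.1 hk).lt_or_eq with hkn | rfl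
    · rw [hr' k hkn, hsum k hkn.le]
      exact value_le_of_lt hkn
    · have : 0 ≤ dstar (r' k) := hd0 _ (by simpa [r'] using hr.bound_nonneg hn)
      rw [hsum k le_rfl]
      linarith [value_le_sum (b := b) (dstar := dstar) (n := k) (t := t) (r := r)]
  · rw [sum_range_succ, hsum n le_rfl]
    simpa [t'] using value_le_sum

/-- The number of the `n` equal slots taken by the first `i` layers of the allocation `t`: their
cumulative allocation, rounded up to a multiple of `1 / n`. -/
def slotCount (n : ℕ) (t : ℕ → ℝ) (i : ℕ) : ℕ := ⌈(n : ℝ) * ∑ l ∈ range i, t l⌉₊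

def slotLayer (n m : ℕ) (t : ℕ → ℝ) (j : ℕ) : ℕ :=
  Nat.findGreatest (fun i => slotCount n t i ≤ j) m

theorem slotCount_zero : slotCount n t 0 = 0 := by simp [slotCount]

theorem slotCount_mono (ht : ∀ i, 0 ≤ t i) : Monotone (slotCount n t) := fun _ _ h =>
  Nat.ceil_mono <| mul_le_mul_of_nonneg_left
    (sum_le_sum_of_subset_of_nonneg (range_subset_range.2 h) fun l _ _ => ht l) n.cast_nonneg

theorem slotCount_of_isAllocation (ht : IsAllocation m t) : slotCount n t m = n := by
  simp [slotCount, ht.2]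

theorem slotCount_slotLayer_le (j : ℕ) : slotCount n t (slotLayer n m t j) ≤ j :=
  Nat.findGreatest_spec (P := fun i => slotCount n t i ≤ j) m.zero_le (by simp [slotCount_zero])

theorem slotLayer_lt (ht : IsAllocation m t) {j : ℕ} (hj : j < n) : slotLayer n m t j < m := by
  refine (Nat.findGreatest_le m).lt_of_ne fun h => ?_
  have := slotCount_slotLayer_le (n := n) (m := m) (t := t) j
  rw [show slotLayer n m t j = m from h, slotCount_of_isAllocation ht] at this
  omega

theorem slotLayer_mono : Monotone (slotLayer n m t) := fun _ _ h =>
  Nat.findGreatest_mono_left (fun _ hi => hi.trans h) m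

/-- Rounding up costs each layer at most one slot, hence at most `M` of its weighted rate. -/
theorem mul_sum_sub_le_sum_slotLayer (ht : IsAllocation m t) (hr : IsRateProfile M m r) {i : ℕ}
    (hi : i ≤ m) :
    n * ∑ l ∈ range i, t l * r l - i * M ≤
      ∑ j ∈ range (slotCount n t i), r (slotLayer n m t j) := by
  unfold slotLayer
  rw [sum_range_comp_findGreatest (slotCount_mono ht.1) slotCount_zero r hi]
  calc (n : ℝ) * ∑ l ∈ range i, t l * r l - i * M = ∑ l ∈ range i, (n * (t l * r l) - M) := by
        simp [sum_sub_distrib, mul_sum]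
    _ ≤ _ := sum_le_sum fun l hl => ?_
  have hl : l < m := (mem_range.1 hl).trans_le hi
  have hslots : (n : ℝ) * t l - 1 ≤ ((slotCount n t (l + 1) - slotCount n t l : ℕ) : ℝ) := by
    convert sub_sub_one_le_natCeil_sub_natCeil
      (mul_nonneg n.cast_nonneg (sum_nonneg fun l _ => ht.1 l)) (mul_le_mul_of_nonneg_left
        (sum_le_sum_of_subset_of_nonneg (range_subset_range.2 l.le_succ) fun l _ _ => ht.1 l)
        n.cast_nonneg) using 2
    · rw [sum_range_succ]
      ring
    · rfl
  rw [nsmul_eq_mul]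
  nlinarith [hr.nonneg hl, hr.le_bound hl, mul_le_mul_of_nonneg_right hslots (hr.nonneg hl)]

theorem exists_sub_le_value_equal (hb : 0 ≤ b) (ht : IsAllocation m t) (hr : IsRateProfile M m r)
    (hn : 0 < n) :
    ∃ r', IsRateProfile M n r' ∧
      value b dstar m t r - b * m * M / n ≤ value b dstar n (fun _ => 1 / (n : ℝ)) r' := by
  have hm : 0 < m := Nat.pos_of_ne_zero fun h => by simpa [h] using ht.2
  have hM := hr.bound_nonneg hm
  set r' := fun j => r (slotLayer n m t j)
  have hr'0 : ∀ j < n, 0 ≤ r' j := fun j hj => hr.nonneg (slotLayer_lt ht hj)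
  have hpartial : ∀ i ≤ m, ∀ k ≤ n, slotCount n t i ≤ k →
      b * ∑ l ∈ range i, t l * r l - b * m * M / n ≤ b * ∑ j ∈ range k, 1 / (n : ℝ) * r' j := by
    intro i hi k hk hik
    have hslots := mul_sum_sub_le_sum_slotLayer (n := n) ht hr hi
    have hmono : ∑ j ∈ range (slotCount n t i), r' j ≤ ∑ j ∈ range k, r' j :=
      sum_le_sum_of_subset_of_nonneg (range_subset_range.2 hik) fun j hj _ =>
        hr'0 j ((mem_range.1 hj).trans_le hk)
    have hiM : (i : ℝ) * M ≤ m * M := mul_le_mul_of_nonneg_right (by exact_mod_cast hi) hM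
    have hn' : (0 : ℝ) < n := by exact_mod_cast hn
    calc b * ∑ l ∈ range i, t l * r l - b * m * M / n
        = b / n * (n * ∑ l ∈ range i, t l * r l - m * M) := by field_simp
      _ ≤ b / n * ∑ j ∈ range k, r' j :=
        mul_le_mul_of_nonneg_left (by linarith) (div_nonneg hb hn'.le)
      _ = b * ∑ j ∈ range k, 1 / (n : ℝ) * r' j := by rw [← mul_sum]; ring
  refine ⟨r', ⟨hr'0 0 hn, fun i j hij hj => hr.2.1 _ _ (slotLayer_mono hij) (slotLayer_lt ht hj),
    fun i hi => hr.le_bound (slotLayer_lt ht hi)⟩, le_value_iff.2 ⟨fun k hk => ?_, ?_⟩⟩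
  · have hkm := slotLayer_lt ht hk
    linarith [value_le_of_lt (b := b) (dstar := dstar) (t := t) (r := r) hkm,
      hpartial _ hkm.le k hk.le (slotCount_slotLayer_le k)]
  · linarith [value_le_sum (b := b) (dstar := dstar) (n := m) (t := t) (r := r),
      hpartial m le_rfl n le_rfl (slotCount_of_isAllocation ht).le]

section Exponents

variable {D : ℝ}

theorem equalExponents_nonempty (hM : 0 ≤ M) : (equalExponents b dstar M n).Nonempty :=
  ⟨_, fun _ => 0, ⟨le_rfl, fun _ _ _ _ => le_rfl, fun _ _ => hM⟩, rfl⟩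

theorem equalExponents_subset (hn : 0 < n) :
    equalExponents b dstar M n ⊆ exponents b dstar M n := by
  rintro v ⟨r, hr, rfl⟩
  refine ⟨_, r, ⟨fun _ => by positivity, ?_⟩, hr, rfl⟩
  simp [field]

theorem exponents_nonempty (hM : 0 ≤ M) (hn : 0 < n) : (exponents b dstar M n).Nonempty :=
  (equalExponents_nonempty hM).mono (equalExponents_subset hn)

theorem exponents_subset_Iic (hD : ∀ x ∈ Set.Icc 0 M, dstar x ≤ D) (hn : 0 < n) :
    exponents b dstar M n ⊆ Set.Iic D := by
  rintro v ⟨t, r, -, hr, rfl⟩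
  exact value_le_of_forall_le hD hr hn

theorem optimalExponent_le (hM : 0 ≤ M) (hD : ∀ x ∈ Set.Icc 0 M, dstar x ≤ D) (hn : 0 < n) :
    optimalExponent b dstar M n ≤ D :=
  csSup_le (exponents_nonempty hM hn) (exponents_subset_Iic hD hn)

theorem optimalExponent_le_succ (hM : 0 ≤ M) (hd0 : ∀ x ∈ Set.Icc 0 M, 0 ≤ dstar x)
    (hD : ∀ x ∈ Set.Icc 0 M, dstar x ≤ D) (hn : 0 < n) :
    optimalExponent b dstar M n ≤ optimalExponent b dstar M (n + 1) := by
  refine csSup_le (exponents_nonempty hM hn) ?_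
  rintro v ⟨t, r, ht, hr, rfl⟩
  exact (value_le_value_update hd0 hn hr).trans (le_csSup ⟨D, exponents_subset_Iic hD n.succ_pos⟩
    ⟨_, _, ht.update_zero, hr.update_bound hn, rfl⟩)

theorem equalExponent_le_optimalExponent (hM : 0 ≤ M) (hD : ∀ x ∈ Set.Icc 0 M, dstar x ≤ D)
    (hn : 0 < n) : equalExponent b dstar M n ≤ optimalExponent b dstar M n :=
  csSup_le_csSup ⟨D, exponents_subset_Iic hD hn⟩ (equalExponents_nonempty hM)
    (equalExponents_subset hn)

theorem optimalExponent_sub_le_equalExponent (hb : 0 ≤ b) (hM : 0 ≤ M)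
    (hD : ∀ x ∈ Set.Icc 0 M, dstar x ≤ D) (hm : 0 < m) (hn : 0 < n) :
    optimalExponent b dstar M m - b * m * M / n ≤ equalExponent b dstar M n := by
  rw [sub_le_iff_le_add]
  refine csSup_le (exponents_nonempty hM hm) ?_
  rintro v ⟨t, r, ht, hr, rfl⟩
  obtain ⟨r', hr', hle⟩ := exists_sub_le_value_equal hb ht hr hn
  rw [← sub_le_iff_le_add]
  exact hle.trans (le_csSup ⟨D, (equalExponents_subset hn).trans (exponents_subset_Iic hD hn)⟩
    ⟨r', hr', rfl⟩)

end Exponents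

theorem dmt_corner_mem_Icc {Mt Mr k : ℕ} (hk : k ≤ min Mt Mr) :
    ((Mt : ℝ) - k) * ((Mr : ℝ) - k) ∈ Set.Icc 0 ((Mt : ℝ) * Mr) := by
  have hkt : (k : ℝ) ≤ Mt := by exact_mod_cast hk.trans (min_le_left _ _)
  have hkr : (k : ℝ) ≤ Mr := by exact_mod_cast hk.trans (min_le_right _ _)
  have hk0 : (0 : ℝ) ≤ k := k.cast_nonneg
  exact ⟨mul_nonneg (sub_nonneg.2 hkt) (sub_nonneg.2 hkr),
    mul_le_mul (by linarith) (by linarith) (sub_nonneg.2 hkr) (Nat.cast_nonneg _)⟩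

/-- Between consecutive corners, `dstar` is a convex combination of the corner values. -/
theorem mapsTo_dmt {Mt Mr : ℕ} (hMt : 1 ≤ Mt) (hMr : 1 ≤ Mr) {dstar : ℝ → ℝ}
    (hd : ∀ k : ℕ, k < min Mt Mr → ∀ x ∈ Set.Icc (k : ℝ) ((k : ℝ) + 1),
      dstar x = ((Mt : ℝ) - k) * ((Mr : ℝ) - k)
        + (x - k) * (((Mt : ℝ) - (k + 1)) * ((Mr : ℝ) - (k + 1))
          - ((Mt : ℝ) - k) * ((Mr : ℝ) - k))) :
    Set.MapsTo dstar (Set.Icc 0 (min Mt Mr : ℝ)) (Set.Icc 0 ((Mt : ℝ) * Mr)) := by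
  intro x hx
  obtain ⟨k, hk, hxk⟩ :=
    exists_nat_mem_Icc_of_le (N := min Mt Mr) (lt_min hMt hMr) hx.1 (by simpa using hx.2)
  have hnext := dmt_corner_mem_Icc (Mt := Mt) (Mr := Mr) hk
  push_cast at hnext
  rw [hd k hk x hxk]
  exact (convex_Icc _ _).add_smul_sub_mem (dmt_corner_mem_Icc hk.le) hnext
    ⟨sub_nonneg.2 hxk.1, by linarith [hxk.2]⟩

end

end LayeredSource

open LayeredSource

/-- For the `n`-layer LS distortion exponent `Δ n` (optimized over channel
allocation `t` and multiplexing gains `r`) and its equal-channel-allocation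
version `Δhat n`, the sequence `Δ` is nondecreasing (for `n ≥ 1`), bounded
above by `d*(0) = M_t M_r`, and `Δ` and `Δhat` converge to a common limit. -/
theorem stmt_3 (Mt Mr : ℕ) (hMt : 1 ≤ Mt) (hMr : 1 ≤ Mr) (b : ℝ) (hb : 0 < b)
    (dstar : ℝ → ℝ)
    -- `dstar` is the piecewise-linear function connecting the points
    -- `(k, (Mt - k)(Mr - k))` for `k = 0, 1, …, min Mt Mr`.
    (hd : ∀ k : ℕ, k < min Mt Mr → ∀ x ∈ Set.Icc (k : ℝ) ((k : ℝ) + 1),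
      dstar x = ((Mt : ℝ) - k) * ((Mr : ℝ) - k)
        + (x - k) * (((Mt : ℝ) - (k + 1)) * ((Mr : ℝ) - (k + 1))
          - ((Mt : ℝ) - k) * ((Mr : ℝ) - k)))
    (Δ Δhat : ℕ → ℝ)
    (hΔ : ∀ n, Δ n = sSup { v : ℝ | ∃ t r : ℕ → ℝ,
        (∀ i, 0 ≤ t i) ∧ (∑ i ∈ Finset.range n, t i) = 1 ∧
        (0 ≤ r 0) ∧ (∀ i j, i ≤ j → j < n → r i ≤ r j) ∧
        (∀ i < n, r i ≤ (min Mt Mr : ℝ)) ∧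
        v = (Finset.range (n + 1)).inf' Finset.nonempty_range_add_one (fun k =>
          if k = n then b * ∑ i ∈ Finset.range n, t i * r i
          else dstar (r k) + b * ∑ i ∈ Finset.range k, t i * r i) })
    (hΔhat : ∀ n, Δhat n = sSup { v : ℝ | ∃ r : ℕ → ℝ,
        (0 ≤ r 0) ∧ (∀ i j, i ≤ j → j < n → r i ≤ r j) ∧
        (∀ i < n, r i ≤ (min Mt Mr : ℝ)) ∧
        v = (Finset.range (n + 1)).inf' Finset.nonempty_range_add_one (fun k =>
          if k = n then b * ∑ i ∈ Finset.range n, (1 / (n : ℝ)) * r i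
          else dstar (r k) + b * ∑ i ∈ Finset.range k, (1 / (n : ℝ)) * r i) }) :
    (∀ n, 1 ≤ n → Δ n ≤ Δ (n + 1)) ∧
    (∀ n, 1 ≤ n → Δ n ≤ (Mt : ℝ) * Mr) ∧
    ∃ l : ℝ, Tendsto Δ atTop (nhds l) ∧ Tendsto Δhat atTop (nhds l) := by
  set M : ℝ := min Mt Mr
  have hM : 0 ≤ M := le_min Mt.cast_nonneg Mr.cast_nonneg
  have hd0 : ∀ x ∈ Set.Icc 0 M, 0 ≤ dstar x := fun x hx => (mapsTo_dmt hMt hMr hd hx).1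
  have hD : ∀ x ∈ Set.Icc 0 M, dstar x ≤ Mt * Mr := fun x hx => (mapsTo_dmt hMt hMr hd hx).2
  obtain rfl : Δ = optimalExponent b dstar M := funext fun n => by
    simp only [hΔ, optimalExponent, exponents, IsAllocation, IsRateProfile, value, and_assoc]
  obtain rfl : Δhat = equalExponent b dstar M := funext fun n => by
    simp only [hΔhat, equalExponent, equalExponents, IsRateProfile, value, and_assoc]
  have hmono : ∀ n, 0 < n → optimalExponent b dstar M n ≤ optimalExponent b dstar M (n + 1) :=
    fun n hn => optimalExponent_le_succ hM hd0 hD hn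
  have hle : ∀ n, 0 < n → optimalExponent b dstar M n ≤ Mt * Mr :=
    fun n hn => optimalExponent_le hM hD hn
  refine ⟨hmono, hle, exists_tendsto_of_sub_div_le hmono hle
    (fun n hn => equalExponent_le_optimalExponent hM hD hn)
    fun m hm => ⟨b * m * M, fun n hn => optimalExponent_sub_le_equalExponent hb.le hM hD hm hn⟩⟩
end

section
/- Let M_t ≥ 1, M_r ≥ 1 be integers, M_* = min(M_t, M_r), b > 0 real, and let d* : [0, M_*] → ℝ be the piecewise-linear function connecting the points (k, (M_t − k)(M_r − k)) for k = 0, 1, …, M_*. For each n ≥ 1 define Δ_n = sup over all t ∈ ℝ^n with t_i ≥ 0 and Σ_{i=1}^n t_i = 1 and all r ∈ ℝ^n with 0 ≤ r_1 ≤ ⋯ ≤ r_n ≤ M_*, of min_{0 ≤ k ≤ n} { d*(r_{k+1}) + b·Σ_{i=1}^k t_i r_i } (where d*(r_{n+1}) is interpreted as 0). Define c_0 = 0, c_i = c_{i−1} + (|M_r − M_t| + 2i − 1)·ln((M_* − i + 1)/(M_* − i)) for i = 1, …, M_* − 1, and c_{M_*} = +∞. Then, for the unique p ∈ {1, …, M_*}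 with c_{p−1} ≤ b < c_p, lim_{n→∞} Δ_n = Σ_{i=1}^{p−1} (|M_r − M_t| + 2i − 1) + (M_* − p + 1)(|M_r − M_t| + 2p − 1)·(1 − e^{−(b − c_{p−1})/(|M_r − M_t| + 2p − 1)}). -/
/-!
Write `d = d*`, `M = M_*` and `F x = ∫ₓ^M |d'(u)| / u du`. Comparing `1 / u` with its values at
the ends of `[y, z]` gives `(d y - d z) / z ≤ F y - F z ≤ (d y - d z) / y`, and both bounds of
the squeeze `Δ_n → d x₀` follow from this alone, where `F x₀ = b`.

Upper bound: given an allocation with value `v` and a rate `ρ` with `d ρ ≤ v`, raise every rate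
`r_k` below `ρ` to `ρ`. Along these rates the potential `(d ρ - d u - b S) / u + F u`
(`S` the accumulated `∑ t_i r_i`) loses at most `b t_k` at layer `k`, so `F ρ ≤ b = F x₀`,
i.e. `ρ ≥ x₀`; by continuity of `d`, `v ≤ d x₀`.

Lower bound: the geometric rates `x₀ q^i` with `q = (M / x₀)^(1/n)`, the shares of the bandwidth
proportional to `(d x_i - d x_{i+1}) / x_i`, achieve `d x₀ / q`.

The thresholds are `c_i = F (M - i)`, so `x₀` lies on the segment `[M - p, M - p + 1]`, where `F`
is `c_{p-1} + (|M_r - M_t| + 2p - 1) log ((M - p + 1) / x)`; solving for `x₀` gives the formula.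
-/

open Filter Finset Real

namespace DistortionExponent

lemma sum_range_add_odd (δ : ℝ) (m : ℕ) :
    ∑ i ∈ range m, (δ + 2 * ((i : ℝ) + 1) - 1) = m * δ + m ^ 2 := by
  induction m with
  | zero => simp
  | succ m ih => rw [sum_range_succ, ih]; push_cast; ring

noncomputable def lsValue (dstar : ℝ → ℝ) (b : ℝ) (n : ℕ) (t r : ℕ → ℝ) : ℝ :=
  (range (n + 1)).inf' nonempty_range_add_one (fun k =>
    if k = n then b * ∑ i ∈ range n, t i * r i
    else dstar (r k) + b * ∑ i ∈ range k, t i * r i)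

def lsExponents (dstar : ℝ → ℝ) (M b : ℝ) (n : ℕ) : Set ℝ :=
  { v | ∃ t r : ℕ → ℝ, (∀ i, 0 ≤ t i) ∧ (∑ i ∈ range n, t i) = 1 ∧
      (0 ≤ r 0) ∧ (∀ i j, i ≤ j → j < n → r i ≤ r j) ∧ (∀ i < n, r i ≤ M) ∧
      v = lsValue dstar b n t r }

section LayeredSourceCoding

variable {dstar d F : ℝ → ℝ} {M b : ℝ} {n : ℕ} {t r : ℕ → ℝ}

lemma lsValue_le_of_lt {k : ℕ} (hk : k < n) :
    lsValue dstar b n t r ≤ dstar (r k) + b * ∑ i ∈ range k, t i * r i := by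
  unfold lsValue
  exact (inf'_le _ (mem_range.2 (by omega))).trans_eq (if_neg hk.ne)

lemma lsValue_le : lsValue dstar b n t r ≤ b * ∑ i ∈ range n, t i * r i := by
  unfold lsValue
  exact (inf'_le _ (mem_range.2 n.lt_succ_self)).trans_eq (if_pos rfl)

lemma le_lsValue {v : ℝ} (hlt : ∀ k < n, v ≤ dstar (r k) + b * ∑ i ∈ range k, t i * r i)
    (hn : v ≤ b * ∑ i ∈ range n, t i * r i) : v ≤ lsValue dstar b n t r := by
  refine le_inf' _ _ fun k hk => ?_
  rcases (Nat.lt_succ_iff.1 (mem_range.1 hk)).lt_or_eq with hk | rfl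
  · simpa [hk.ne] using hlt k hk
  · simpa using hn

lemma potential_le {y z W P P' : ℝ} (hkey : F y - F z ≤ (d y - d z) / y) (hy : 0 < y)
    (hyz : y ≤ z) (hslack : W - d z - P' ≤ 0) :
    (W - d y - P) / y + F y ≤ (P' - P) / y + ((W - d z - P') / z + F z) := by
  have hz : 0 < z := hy.trans_le hyz
  have hinv : (W - d z - P') * (1 / y - 1 / z) ≤ 0 :=
    mul_nonpos_of_nonpos_of_nonneg hslack (sub_nonneg.2 (one_div_le_one_div_of_le hy hyz))
  have key : (W - d y - P) / y + F y - ((P' - P) / y + ((W - d z - P') / z + F z))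
      = (W - d z - P') * (1 / y - 1 / z) + ((F y - F z) - (d y - d z) / y) := by
    field_simp; ring
  linarith

lemma potential_le_sum {u P : ℕ → ℝ} {W : ℝ}
    (hkey : ∀ y z, 0 < y → y ≤ z → F y - F z ≤ (d y - d z) / y)
    (hu : ∀ k < n, 0 < u k ∧ u k ≤ u (k + 1))
    (hslack : ∀ k < n, W - d (u (k + 1)) - P (k + 1) ≤ 0) :
    (W - d (u 0) - P 0) / u 0 + F (u 0)
      ≤ ∑ k ∈ range n, (P (k + 1) - P k) / u k + ((W - d (u n) - P n) / u n + F (u n)) := by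
  set Ψ : ℕ → ℝ := fun k => (W - d (u k) - P k) / u k + F (u k)
  have hstep : ∀ k ∈ range n, Ψ k - Ψ (k + 1) ≤ (P (k + 1) - P k) / u k := fun k hk => by
    obtain ⟨hpos, hmono⟩ := hu k (mem_range.1 hk)
    have := potential_le (P := P k) (hkey _ _ hpos hmono) hpos hmono (hslack k (mem_range.1 hk))
    simp only [Ψ]; linarith
  have := sum_le_sum hstep
  rw [sum_range_sub' Ψ] at this
  simp only [Ψ] at this; linarith

lemma apply_le_of_slack_nonpos {u S t : ℕ → ℝ} {ρ : ℝ}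
    (hkey : ∀ y z, 0 < y → y ≤ z → F y - F z ≤ (d y - d z) / y) (hFM : F M = 0) (hb : 0 ≤ b)
    (hρ : 0 < ρ) (hρu : ∀ k ≤ n, ρ ≤ u k) (hu : ∀ k < n, u k ≤ u (k + 1)) (hun : u n = M)
    (hS0 : S 0 = 0) (hS : ∀ k < n, S (k + 1) - S k ≤ t k * u k) (ht : ∑ k ∈ range n, t k = 1)
    (hslack : ∀ k ≤ n, d ρ - d (u k) - b * S k ≤ 0) : F ρ ≤ b := by
  have hupos : ∀ k ≤ n, 0 < u k := fun k hk => hρ.trans_le (hρu k hk)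
  have hstart : F ρ ≤ (d ρ - d (u 0) - b * S 0) / u 0 + F (u 0) := by
    simpa [hS0] using potential_le (W := d ρ) (P := 0) (P' := 0) (hkey _ _ hρ (hρu 0 n.zero_le))
      hρ (hρu 0 n.zero_le) (by simpa [hS0] using hslack 0 n.zero_le)
  have hlayer : ∀ k ∈ range n, (b * S (k + 1) - b * S k) / u k ≤ b * t k := fun k hk => by
    have hk := mem_range.1 hk
    rw [div_le_iff₀ (hupos k hk.le), mul_assoc, ← mul_sub]
    exact mul_le_mul_of_nonneg_left (hS k hk) hb
  have hlast : (d ρ - d (u n) - b * S n) / u n + F (u n) ≤ 0 := by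
    have h := hslack n le_rfl
    have hpos := hupos n le_rfl
    rw [hun] at h hpos ⊢
    rw [hFM, add_zero]
    exact div_nonpos_of_nonpos_of_nonneg h hpos.le
  calc F ρ ≤ (d ρ - d (u 0) - b * S 0) / u 0 + F (u 0) := hstart
    _ ≤ ∑ k ∈ range n, (b * S (k + 1) - b * S k) / u k
          + ((d ρ - d (u n) - b * S n) / u n + F (u n)) :=
        potential_le_sum (P := fun k => b * S k) hkey
          (fun k hk => ⟨hupos k hk.le, hu k hk⟩) fun k hk => hslack (k + 1) hk
    _ ≤ ∑ k ∈ range n, b * t k + 0 := add_le_add (sum_le_sum hlayer) hlast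
    _ = b := by rw [← mul_sum, ht, mul_one, add_zero]

theorem apply_le_of_mem_lsExponents
    (hkey : ∀ y z, 0 < y → y ≤ z → F y - F z ≤ (d y - d z) / y)
    (hd : ∀ x ∈ Set.Icc 0 M, dstar x = d x) (hdM : d M = 0) (hFM : F M = 0) (hb : 0 ≤ b)
    {v : ℝ} (hv : v ∈ lsExponents dstar M b n) {ρ : ℝ} (hρ : 0 < ρ) (hρM : ρ ≤ M)
    (hρv : d ρ ≤ v) : F ρ ≤ b := by
  obtain ⟨t, r, ht, ht1, hr0, hr, hrM, rfl⟩ := hv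
  set S : ℕ → ℝ := fun k => ∑ i ∈ range k, t i * r i
  have hr_nonneg : ∀ i < n, 0 ≤ r i := fun i hi => hr0.trans (hr 0 i i.zero_le hi)
  have hS : ∀ k ≤ n, 0 ≤ S k := fun k hk => sum_nonneg fun i hi =>
    mul_nonneg (ht i) (hr_nonneg i (by rw [mem_range] at hi; omega))
  set u : ℕ → ℝ := fun k => if k < n then max (r k) ρ else M
  have hu_ge : ∀ k, ρ ≤ u k := fun k => by
    by_cases hk : k < n <;> simp [u, hk, hρM]
  have hu_mono : ∀ k < n, u k ≤ u (k + 1) := fun k hk => by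
    by_cases hk' : k + 1 < n
    · simp only [u, if_pos hk, if_pos hk']
      exact max_le_max (hr k (k + 1) k.le_succ hk') le_rfl
    · simp only [u, if_pos hk, if_neg hk']
      exact max_le (hrM k hk) hρM
  have hslack : ∀ k ≤ n, d ρ - d (u k) - b * S k ≤ 0 := fun k hk => by
    rcases hk.lt_or_eq with hk | rfl
    · have hval := lsValue_le_of_lt (dstar := dstar) (b := b) (t := t) (r := r) hk
      rw [hd _ ⟨hr_nonneg k hk, hrM k hk⟩] at hval
      by_cases hρr : ρ ≤ r k
      · simp only [u, if_pos hk, max_eq_left hρr]; linarith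
      · simp only [u, if_pos hk, max_eq_right (not_le.1 hρr).le]
        nlinarith [hS k hk.le]
    · simp only [u, lt_irrefl, if_false, hdM]
      linarith [lsValue_le (dstar := dstar) (b := b) (n := k) (t := t) (r := r)]
  refine apply_le_of_slack_nonpos hkey hFM hb hρ (fun k _ => hu_ge k) hu_mono (by simp [u])
    (by simp [S]) (fun k hk => ?_) ht1 hslack
  simp only [S, u, sum_range_succ, add_sub_cancel_left, if_pos hk]
  exact mul_le_mul_of_nonneg_left (le_max_left _ _) (ht k)

theorem le_of_mem_lsExponents {x₀ v : ℝ}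
    (hkey : ∀ y z, 0 < y → y ≤ z → F y - F z ≤ (d y - d z) / y)
    (hkey' : ∀ y z, 0 < y → y ≤ z → (d y - d z) / z ≤ F y - F z)
    (hd : ∀ x ∈ Set.Icc 0 M, dstar x = d x) (hdM : d M = 0) (hFM : F M = 0) (hb : 0 ≤ b)
    (hstrict : StrictAntiOn d (Set.Icc 0 M)) (hcont : ContinuousAt d x₀) (hx₀ : 0 < x₀)
    (hx₀M : x₀ ≤ M) (hFx₀ : F x₀ = b) (hv : v ∈ lsExponents dstar M b n) : v ≤ d x₀ := by
  by_contra! hlt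
  obtain ⟨ρ, hdρ, hρ⟩ : ∃ ρ, d ρ < v ∧ ρ ∈ Set.Ioo 0 x₀ :=
    ((hcont.eventually (gt_mem_nhds hlt)).filter_mono nhdsWithin_le_nhds
      |>.and (Ioo_mem_nhdsLT hx₀)).exists
  have hFρ := apply_le_of_mem_lsExponents hkey hd hdM hFM hb hv hρ.1 (hρ.2.le.trans hx₀M) hdρ.le
  have hdρx₀ : d x₀ < d ρ := hstrict ⟨hρ.1.le, hρ.2.le.trans hx₀M⟩ ⟨hx₀.le, hx₀M⟩ hρ.2
  have hdiff : (d ρ - d x₀) / x₀ ≤ 0 := (hkey' ρ x₀ hρ.1 hρ.2.le).trans (by linarith)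
  linarith [div_pos (sub_pos.2 hdρx₀) hx₀]

theorem exists_mem_lsExponents_div_le {x : ℕ → ℝ} {q : ℝ}
    (hkey : ∀ y z, 0 < y → y ≤ z → F y - F z ≤ (d y - d z) / y)
    (hkey' : ∀ y z, 0 < y → y ≤ z → (d y - d z) / z ≤ F y - F z) (hanti : Antitone d)
    (hd : ∀ x ∈ Set.Icc 0 M, dstar x = d x) (hdM : d M = 0) (hFM : F M = 0) (hb : 0 < b)
    (hx0 : 0 < x 0) (hx : Monotone x) (hxn : x n = M) (hq : ∀ i < n, x (i + 1) ≤ q * x i)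
    (hFx : F (x 0) = b) : ∃ v ∈ lsExponents dstar M b n, d (x 0) / q ≤ v := by
  have hxpos : ∀ i, 0 < x i := fun i => hx0.trans_le (hx i.zero_le)
  have hdrop : ∀ i, 0 ≤ d (x i) - d (x (i + 1)) := fun i => sub_nonneg.2 (hanti (hx i.le_succ))
  set w : ℕ → ℝ := fun i => (d (x i) - d (x (i + 1))) / x i
  set W := ∑ i ∈ range n, w i
  have htel : ∑ i ∈ range n, (F (x i) - F (x (i + 1))) = b := by
    rw [sum_range_sub', hxn, hFM, hFx, sub_zero]
  have hbW : b ≤ W := htel ▸ sum_le_sum fun i _ => hkey _ _ (hxpos i) (hx i.le_succ)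
  have hWq : W ≤ q * b := by
    rw [← htel, mul_sum]
    refine sum_le_sum fun i hi => ?_
    have hi := mem_range.1 hi
    have hq0 : 0 ≤ q := nonneg_of_mul_nonneg_left ((hxpos _).le.trans (hq i hi)) (hxpos i)
    calc w i ≤ q * ((d (x i) - d (x (i + 1))) / x (i + 1)) := by
          rw [mul_div_assoc', div_le_div_iff₀ (hxpos i) (hxpos _)]
          nlinarith [mul_le_mul_of_nonneg_left (hq i hi) (hdrop i)]
      _ ≤ q * (F (x i) - F (x (i + 1))) :=
          mul_le_mul_of_nonneg_left (hkey' _ _ (hxpos i) (hx i.le_succ)) hq0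
  have hW : 0 < W := hb.trans_le hbW
  have hq : 0 < q := pos_of_mul_pos_left (hW.trans_le hWq) hb.le
  have hpartial : ∀ k, b * ∑ i ∈ range k, w i / W * x i = b / W * (d (x 0) - d (x k)) := by
    intro k
    rw [← sum_range_sub' (fun i => d (x i)), mul_sum, mul_sum]
    refine sum_congr rfl fun i _ => ?_
    simp only [w]
    field_simp [(hxpos i).ne']
  have hd_nonneg : ∀ k ≤ n, 0 ≤ d (x k) := fun k hk => hdM ▸ hxn ▸ hanti (hx hk)
  have hshare : d (x 0) / q ≤ b / W * d (x 0) := by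
    rw [div_eq_mul_inv, mul_comm]
    refine mul_le_mul_of_nonneg_right ?_ (hd_nonneg 0 n.zero_le)
    rw [inv_eq_one_div, div_le_div_iff₀ hq hW]
    linarith
  have hbW' : b / W ≤ 1 := (div_le_one hW).2 hbW
  refine ⟨_, ⟨fun i => w i / W, x, fun i => div_nonneg (div_nonneg (hdrop i) (hxpos i).le) hW.le,
    by rw [← sum_div, div_self hW.ne'], hx0.le, fun i j hij _ => hx hij,
    fun i hi => hxn ▸ hx hi.le, rfl⟩, le_lsValue (fun k hk => ?_) ?_⟩
  · rw [hpartial, hd _ ⟨(hxpos k).le, hxn ▸ hx hk.le⟩]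
    nlinarith [hd_nonneg k hk.le, hbW']
  · rw [hpartial, hxn, hdM, sub_zero]
    exact hshare

theorem tendsto_sSup_lsExponents {x₀ : ℝ}
    (hkey : ∀ y z, 0 < y → y ≤ z → F y - F z ≤ (d y - d z) / y)
    (hkey' : ∀ y z, 0 < y → y ≤ z → (d y - d z) / z ≤ F y - F z) (hanti : Antitone d)
    (hstrict : StrictAntiOn d (Set.Icc 0 M)) (hcont : Continuous d)
    (hd : ∀ x ∈ Set.Icc 0 M, dstar x = d x) (hdM : d M = 0) (hFM : F M = 0) (hb : 0 < b)
    (hx₀ : 0 < x₀) (hx₀M : x₀ ≤ M) (hFx₀ : F x₀ = b) :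
    Tendsto (fun n => sSup (lsExponents dstar M b n)) atTop (nhds (d x₀)) := by
  have hupper : ∀ n, ∀ v ∈ lsExponents dstar M b n, v ≤ d x₀ := fun n v hv =>
    le_of_mem_lsExponents hkey hkey' hd hdM hFM hb.le hstrict hcont.continuousAt hx₀ hx₀M hFx₀ hv
  have hlower : ∀ n ≠ 0, ∃ v ∈ lsExponents dstar M b n, d x₀ / exp (log (M / x₀) / n) ≤ v := by
    intro n hn
    set q := exp (log (M / x₀) / n)
    have hq : 1 ≤ q := one_le_exp (div_nonneg (log_nonneg ((one_le_div hx₀).2 hx₀M)) n.cast_nonneg)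
    have hqn : x₀ * q ^ n = M := by
      rw [← exp_nat_mul, mul_div_cancel₀ _ (Nat.cast_ne_zero.2 hn),
        exp_log (div_pos (hx₀.trans_le hx₀M) hx₀), mul_div_cancel₀ _ hx₀.ne']
    simpa using exists_mem_lsExponents_div_le (x := fun i => x₀ * q ^ i) hkey hkey' hanti hd hdM
      hFM hb (by simpa using hx₀)
      (fun i j hij => mul_le_mul_of_nonneg_left (pow_le_pow_right₀ hq hij) hx₀.le)
      hqn (fun i _ => by rw [pow_succ]; linarith) (by simpa using hFx₀)
  have hlim : Tendsto (fun n : ℕ => d x₀ / exp (log (M / x₀) / n)) atTop (nhds (d x₀)) := by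
    have h := (tendsto_const_div_atTop_nhds_zero_nat (log (M / x₀))).rexp.inv₀ (exp_ne_zero 0)
    simpa [div_eq_mul_inv] using h.const_mul (d x₀)
  refine tendsto_of_tendsto_of_tendsto_of_le_of_le' hlim tendsto_const_nhds ?_
    (Eventually.of_forall fun n => Real.sSup_le (hupper n) (hdM ▸ hanti hx₀M))
  filter_upwards [eventually_ne_atTop 0] with n hn
  obtain ⟨v, hv, hle⟩ := hlower n hn
  exact hle.trans (le_csSup ⟨d x₀, hupper n⟩ hv)

end LayeredSourceCoding

lemma div_le_log_div_le {x y a b : ℝ} (hx : 0 < x) (hxa : x ≤ a) (hab : a ≤ b) (hby : b ≤ y) :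
    (b - a) / y ≤ log (b / a) ∧ log (b / a) ≤ (b - a) / x := by
  have ha : 0 < a := hx.trans_le hxa
  have hb : 0 < b := ha.trans_le hab
  constructor
  · calc (b - a) / y ≤ (b - a) / b := div_le_div_of_nonneg_left (by linarith) hb hby
      _ = 1 - (b / a)⁻¹ := by field_simp
      _ ≤ log (b / a) := one_sub_inv_le_log_of_pos (by positivity)
  · calc log (b / a) ≤ b / a - 1 := log_le_sub_one_of_pos (by positivity)
      _ = (b - a) / a := by field_simp
      _ ≤ (b - a) / x := div_le_div_of_nonneg_left (by linarith) hx hxa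

noncomputable def clampIcc (a b x : ℝ) : ℝ := max a (min x b)

section Clamp

variable {a b x y : ℝ}

lemma clampIcc_mono (a b : ℝ) : Monotone (clampIcc a b) :=
  fun _ _ h => max_le_max le_rfl (min_le_min_right b h)

lemma continuous_clampIcc (a b : ℝ) : Continuous (clampIcc a b) :=
  continuous_const.max (continuous_id.min continuous_const)

lemma clampIcc_of_le (hx : x ≤ a) : clampIcc a b x = a :=
  max_eq_left ((min_le_left x b).trans hx)

lemma clampIcc_of_ge (hab : a ≤ b) (hx : b ≤ x) : clampIcc a b x = b := by
  rw [clampIcc, min_eq_right hx, max_eq_right hab]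

lemma clampIcc_of_mem (hx : x ∈ Set.Icc a b) : clampIcc a b x = x := by
  rw [clampIcc, min_eq_left hx.2, max_eq_right hx.1]

lemma clampIcc_pos (hb : 0 < b) (hx : 0 < x) : 0 < clampIcc a b x :=
  (lt_min hx hb).trans_le (le_max_right _ _)

lemma clampIcc_eq_or_le_of_le (hxy : x ≤ y) :
    clampIcc a b x = clampIcc a b y ∨ x ≤ clampIcc a b x ∧ clampIcc a b y ≤ y := by
  by_cases hbx : b ≤ x
  · left; rw [clampIcc, clampIcc, min_eq_right hbx, min_eq_right (hbx.trans hxy)]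
  by_cases hya : y ≤ a
  · left
    rw [clampIcc, clampIcc, max_eq_left ((min_le_left x b).trans (hxy.trans hya)),
      max_eq_left ((min_le_left y b).trans hya)]
  exact Or.inr ⟨(min_eq_left (not_le.1 hbx).le).ge.trans (le_max_right _ _),
    max_le (not_le.1 hya).le (min_le_left _ _)⟩

lemma div_le_log_clampIcc_div_le (hb : 0 < b) (hx : 0 < x) (hxy : x ≤ y) :
    (clampIcc a b y - clampIcc a b x) / y ≤ log (clampIcc a b y / clampIcc a b x) ∧
      log (clampIcc a b y / clampIcc a b x) ≤ (clampIcc a b y - clampIcc a b x) / x := by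
  rcases clampIcc_eq_or_le_of_le (a := a) (b := b) hxy with heq | ⟨hx', hy'⟩
  · rw [heq, sub_self, zero_div, zero_div, div_self (clampIcc_pos hb (hx.trans_le hxy)).ne',
      log_one]
    exact ⟨le_rfl, le_rfl⟩
  · exact div_le_log_div_le hx hx' (clampIcc_mono a b hxy) hy'

end Clamp

lemma sum_clampIcc_of_mem_Icc {m k : ℕ} (hk : k < m) {x : ℝ} (hx : x ∈ Set.Icc (k : ℝ) (k + 1))
    (h : ℕ → ℝ → ℝ) (h_right : ∀ j : ℕ, h j (j + 1) = 0) :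
    ∑ j ∈ range m, h j (clampIcc j (j + 1) x)
      = h k x + ∑ j ∈ range m, h j (clampIcc j (j + 1) (k + 1)) := by
  have term : ∀ j : ℕ, h j (clampIcc j (j + 1) x)
      = (if j = k then h k x else 0) + h j (clampIcc j (j + 1) (k + 1)) := by
    intro j
    rcases lt_trichotomy j k with hjk | rfl | hjk
    · have hj : (j : ℝ) + 1 ≤ k := by exact_mod_cast hjk
      rw [if_neg hjk.ne, clampIcc_of_ge (by linarith) (hj.trans hx.1),
        clampIcc_of_ge (by linarith) (by linarith), zero_add]
    · rw [if_pos rfl, clampIcc_of_mem hx, clampIcc_of_ge (by linarith) le_rfl, h_right, add_zero]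
    · have hj : (k : ℝ) + 1 ≤ j := by exact_mod_cast hjk
      rw [if_neg hjk.ne', clampIcc_of_le (hx.2.trans hj), clampIcc_of_le hj, zero_add]
  rw [sum_congr rfl fun j _ => term j, sum_add_distrib, sum_ite_eq' (range m) k,
    if_pos (mem_range.2 hk)]

noncomputable def dmtSlope (Mt Mr j : ℕ) : ℝ := Mt + Mr - 2 * j - 1

/-- The DMT curve `d*`: on `[k, k + 1]` only the `k`-th summand varies, with slope
`-dmtSlope Mt Mr k = (Mt - k - 1) (Mr - k - 1) - (Mt - k) (Mr - k)`. -/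
noncomputable def dmt (Mt Mr : ℕ) (x : ℝ) : ℝ :=
  ∑ j ∈ range (min Mt Mr), dmtSlope Mt Mr j * (j + 1 - clampIcc j (j + 1) x)

/-- `∫ₓ^{M_*} |d*'(u)| / u du`. -/
noncomputable def dmtLog (Mt Mr : ℕ) (x : ℝ) : ℝ :=
  ∑ j ∈ range (min Mt Mr), dmtSlope Mt Mr j * log ((j + 1) / clampIcc j (j + 1) x)

section Dmt

variable {Mt Mr : ℕ}

lemma one_le_dmtSlope {j : ℕ} (hj : j < min Mt Mr) : 1 ≤ dmtSlope Mt Mr j := by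
  have ht : (j : ℝ) + 1 ≤ Mt := by exact_mod_cast (show j + 1 ≤ Mt by omega)
  have hr : (j : ℝ) + 1 ≤ Mr := by exact_mod_cast (show j + 1 ≤ Mr by omega)
  unfold dmtSlope; linarith

lemma abs_sub_eq_add_sub_two_mul_min (Mt Mr : ℕ) :
    |(Mr : ℝ) - Mt| = Mt + Mr - 2 * ((min Mt Mr : ℕ) : ℝ) := by
  rcases le_total Mt Mr with h | h
  · have h' : (Mt : ℝ) ≤ Mr := by exact_mod_cast h
    rw [min_eq_left h, abs_of_nonneg (by linarith)]; ring
  · have h' : (Mr : ℝ) ≤ Mt := by exact_mod_cast h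
    rw [min_eq_right h, abs_of_nonpos (by linarith)]; ring

lemma sub_min_mul_sub_min (Mt Mr : ℕ) :
    ((Mt : ℝ) - (min Mt Mr : ℕ)) * ((Mr : ℝ) - (min Mt Mr : ℕ)) = 0 := by
  rcases le_total Mt Mr with h | h <;> simp [h]

lemma dmtSlope_min_sub {p : ℕ} (hp : p ≤ min Mt Mr) :
    dmtSlope Mt Mr (min Mt Mr - p) = |(Mr : ℝ) - Mt| + 2 * p - 1 := by
  rw [dmtSlope, abs_sub_eq_add_sub_two_mul_min, Nat.cast_sub hp]; ring

lemma dmt_of_mem_Icc {k : ℕ} (hk : k < min Mt Mr) {x : ℝ} (hx : x ∈ Set.Icc (k : ℝ) (k + 1)) :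
    dmt Mt Mr x = dmt Mt Mr (k + 1) + dmtSlope Mt Mr k * (k + 1 - x) := by
  rw [dmt, sum_clampIcc_of_mem_Icc hk hx (fun j g => dmtSlope Mt Mr j * (j + 1 - g))
    fun j => by ring, add_comm, dmt]

lemma dmtLog_of_mem_Icc {k : ℕ} (hk : k < min Mt Mr) {x : ℝ}
    (hx : x ∈ Set.Icc (k : ℝ) (k + 1)) :
    dmtLog Mt Mr x = dmtLog Mt Mr (k + 1) + dmtSlope Mt Mr k * log ((k + 1) / x) := by
  rw [dmtLog, sum_clampIcc_of_mem_Icc hk hx (fun j g => dmtSlope Mt Mr j * log ((j + 1) / g))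
    fun j => by rw [div_self (by positivity), log_one, mul_zero], add_comm, dmtLog]

lemma dmt_min : dmt Mt Mr (min Mt Mr : ℕ) = 0 := by
  refine sum_eq_zero fun j hj => ?_
  have hj : (j : ℝ) + 1 ≤ (min Mt Mr : ℕ) := by exact_mod_cast mem_range.1 hj
  rw [clampIcc_of_ge (by linarith) hj, sub_self, mul_zero]

lemma dmtLog_min : dmtLog Mt Mr (min Mt Mr : ℕ) = 0 := by
  refine sum_eq_zero fun j hj => ?_
  have hj : (j : ℝ) + 1 ≤ (min Mt Mr : ℕ) := by exact_mod_cast mem_range.1 hj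
  rw [clampIcc_of_ge (by linarith) hj, div_self (by positivity), log_one, mul_zero]

lemma dmt_natCast {k : ℕ} (hk : k ≤ min Mt Mr) :
    dmt Mt Mr k = ((Mt : ℝ) - k) * ((Mr : ℝ) - k) := by
  induction hk using Nat.decreasingInduction with
  | self => rw [dmt_min, sub_min_mul_sub_min]
  | of_succ k hk ih =>
    rw [dmt_of_mem_Icc hk ⟨le_rfl, by linarith⟩, ← Nat.cast_add_one, ih, dmtSlope]
    push_cast; ring

lemma dmt_antitone : Antitone (dmt Mt Mr) := fun x y hxy =>
  sum_le_sum fun j hj => mul_le_mul_of_nonneg_left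
    (by linarith [clampIcc_mono (j : ℝ) (j + 1) hxy])
    (zero_le_one.trans (one_le_dmtSlope (mem_range.1 hj)))

lemma continuous_dmt : Continuous (dmt Mt Mr) :=
  continuous_finsetSum _ fun _ _ =>
    continuous_const.mul (continuous_const.sub (continuous_clampIcc _ _))

lemma dmt_strictAntiOn : StrictAntiOn (dmt Mt Mr) (Set.Icc 0 (min Mt Mr : ℕ)) := by
  intro x hx y hy hxy
  set k := ⌊x⌋₊
  have hkx : (k : ℝ) ≤ x := Nat.floor_le hx.1
  have hxk : x < k + 1 := Nat.lt_floor_add_one x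
  have hk : k < min Mt Mr := by exact_mod_cast hkx.trans_lt (hxy.trans_le hy.2)
  set z := min y (k + 1)
  have hz : z ∈ Set.Icc (k : ℝ) (k + 1) := ⟨le_min (by linarith) (by linarith), min_le_right _ _⟩
  have hxz : x < z := lt_min hxy hxk
  have hzy : dmt Mt Mr y ≤ dmt Mt Mr z := dmt_antitone (min_le_left _ _)
  have hdiff : dmt Mt Mr x - dmt Mt Mr z = dmtSlope Mt Mr k * (z - x) := by
    rw [dmt_of_mem_Icc hk ⟨hkx, hxk.le⟩, dmt_of_mem_Icc hk hz]; ring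
  nlinarith [one_le_dmtSlope hk]

lemma dmt_sub_dmt (y z : ℝ) : dmt Mt Mr y - dmt Mt Mr z
    = ∑ j ∈ range (min Mt Mr),
        dmtSlope Mt Mr j * (clampIcc j (j + 1) z - clampIcc j (j + 1) y) := by
  rw [dmt, dmt, ← sum_sub_distrib]
  exact sum_congr rfl fun j _ => by ring

lemma dmtLog_sub_dmtLog {y z : ℝ} (hy : 0 < y) (hz : 0 < z) : dmtLog Mt Mr y - dmtLog Mt Mr z
    = ∑ j ∈ range (min Mt Mr),
        dmtSlope Mt Mr j * log (clampIcc j (j + 1) z / clampIcc j (j + 1) y) := by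
  rw [dmtLog, dmtLog, ← sum_sub_distrib]
  refine sum_congr rfl fun j _ => ?_
  have hcy := clampIcc_pos (a := j) (by positivity : (0 : ℝ) < j + 1) hy
  have hcz := clampIcc_pos (a := j) (by positivity : (0 : ℝ) < j + 1) hz
  rw [← mul_sub, log_div (by positivity) hcy.ne', log_div (by positivity) hcz.ne',
    log_div hcz.ne' hcy.ne']
  ring

lemma dmtLog_sub_le {y z : ℝ} (hy : 0 < y) (hyz : y ≤ z) :
    dmtLog Mt Mr y - dmtLog Mt Mr z ≤ (dmt Mt Mr y - dmt Mt Mr z) / y := by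
  rw [dmtLog_sub_dmtLog hy (hy.trans_le hyz), dmt_sub_dmt, sum_div]
  refine sum_le_sum fun j hj => ?_
  rw [mul_div_assoc]
  exact mul_le_mul_of_nonneg_left (div_le_log_clampIcc_div_le (by positivity) hy hyz).2
    (zero_le_one.trans (one_le_dmtSlope (mem_range.1 hj)))

lemma div_le_dmtLog_sub {y z : ℝ} (hy : 0 < y) (hyz : y ≤ z) :
    (dmt Mt Mr y - dmt Mt Mr z) / z ≤ dmtLog Mt Mr y - dmtLog Mt Mr z := by
  rw [dmtLog_sub_dmtLog hy (hy.trans_le hyz), dmt_sub_dmt, sum_div]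
  refine sum_le_sum fun j hj => ?_
  rw [mul_div_assoc]
  exact mul_le_mul_of_nonneg_left (div_le_log_clampIcc_div_le (by positivity) hy hyz).1
    (zero_le_one.trans (one_le_dmtSlope (mem_range.1 hj)))

lemma eq_dmt_of_mem_Icc {dstar : ℝ → ℝ}
    (hd : ∀ k : ℕ, k < min Mt Mr → ∀ x ∈ Set.Icc (k : ℝ) ((k : ℝ) + 1),
      dstar x = ((Mt : ℝ) - k) * ((Mr : ℝ) - k)
        + (x - k) * (((Mt : ℝ) - (k + 1)) * ((Mr : ℝ) - (k + 1))
          - ((Mt : ℝ) - k) * ((Mr : ℝ) - k)))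
    (hM : 0 < min Mt Mr) : ∀ x ∈ Set.Icc 0 ((min Mt Mr : ℕ) : ℝ), dstar x = dmt Mt Mr x := by
  intro x hx
  set k := ⌈x⌉₊ - 1
  have hceil : ⌈x⌉₊ ≤ min Mt Mr := Nat.ceil_le.2 hx.2
  have hk : k < min Mt Mr := by omega
  have hkx : (k : ℝ) ≤ x := by
    rcases Nat.eq_zero_or_pos ⌈x⌉₊ with h0 | hpos
    · simpa [k, h0] using hx.1
    · have : (k : ℝ) + 1 = ⌈x⌉₊ := by exact_mod_cast (show k + 1 = ⌈x⌉₊ by omega)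
      linarith [Nat.ceil_lt_add_one hx.1]
  have hxk : x ≤ k + 1 :=
    (Nat.le_ceil x).trans (by exact_mod_cast (show ⌈x⌉₊ ≤ k + 1 by omega))
  have hdk := dmt_natCast (Mt := Mt) (Mr := Mr) (k := k + 1) hk
  push_cast at hdk
  rw [hd k hk x ⟨hkx, hxk⟩, dmt_of_mem_Icc hk ⟨hkx, hxk⟩, hdk, dmtSlope]
  ring

lemma threshold_eq_dmtLog {c : ℕ → ℝ} (hc0 : c 0 = 0)
    (hc : ∀ i : ℕ, 1 ≤ i → i ≤ min Mt Mr - 1 →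
      c i = c (i - 1) + (|(Mr : ℝ) - (Mt : ℝ)| + 2 * (i : ℝ) - 1)
        * Real.log ((((min Mt Mr : ℕ) : ℝ) - i + 1) / (((min Mt Mr : ℕ) : ℝ) - i)))
    {i : ℕ} (hi : i ≤ min Mt Mr - 1) : c i = dmtLog Mt Mr (min Mt Mr - i : ℕ) := by
  induction i with
  | zero => rw [hc0, Nat.sub_zero, dmtLog_min]
  | succ i ih =>
    have hk : min Mt Mr - (i + 1) < min Mt Mr := by omega
    have hcast : ((min Mt Mr - (i + 1) : ℕ) : ℝ) = (min Mt Mr : ℕ) - (i + 1) := by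
      rw [Nat.cast_sub (by omega)]; push_cast; ring
    have hcast' : ((min Mt Mr - i : ℕ) : ℝ) = ((min Mt Mr - (i + 1) : ℕ) : ℝ) + 1 := by
      rw [hcast, Nat.cast_sub (by omega)]; ring
    rw [hc (i + 1) (by omega) hi, Nat.add_sub_cancel, ih (by omega),
      dmtLog_of_mem_Icc hk ⟨le_rfl, by linarith⟩, dmtSlope_min_sub (by omega), hcast', hcast]
    push_cast
    ring_nf

noncomputable def dmtLogInv (Mt Mr k : ℕ) (b : ℝ) : ℝ :=
  (k + 1) * exp (-(b - dmtLog Mt Mr (k + 1)) / dmtSlope Mt Mr k)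

lemma dmtLogInv_mem_Icc {k : ℕ} (hk : k < min Mt Mr) {b : ℝ} (hb : dmtLog Mt Mr (k + 1) ≤ b)
    (hb' : 0 < k → b < dmtLog Mt Mr k) : dmtLogInv Mt Mr k b ∈ Set.Icc (k : ℝ) (k + 1) := by
  have hs : 0 < dmtSlope Mt Mr k := zero_lt_one.trans_le (one_le_dmtSlope hk)
  refine ⟨?_, mul_le_of_le_one_right (by positivity)
    (exp_le_one_iff.2 (div_nonpos_of_nonpos_of_nonneg (by linarith) hs.le))⟩
  rcases Nat.eq_zero_or_pos k with rfl | hpos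
  · rw [Nat.cast_zero, dmtLogInv]; positivity
  have hFk := dmtLog_of_mem_Icc hk (x := k) ⟨le_rfl, by linarith⟩
  have hlog : log (k / (k + 1)) ≤ -(b - dmtLog Mt Mr (k + 1)) / dmtSlope Mt Mr k := by
    rw [le_div_iff₀ hs, ← inv_div, log_inv]
    nlinarith [hb' hpos]
  calc (k : ℝ) = (k + 1) * exp (log (k / (k + 1))) := by
        rw [exp_log (by positivity)]; field_simp
    _ ≤ dmtLogInv Mt Mr k b := by unfold dmtLogInv; gcongr

lemma dmtLog_dmtLogInv {k : ℕ} (hk : k < min Mt Mr) {b : ℝ}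
    (hx : dmtLogInv Mt Mr k b ∈ Set.Icc (k : ℝ) (k + 1)) :
    dmtLog Mt Mr (dmtLogInv Mt Mr k b) = b := by
  have hs : 0 < dmtSlope Mt Mr k := zero_lt_one.trans_le (one_le_dmtSlope hk)
  rw [dmtLog_of_mem_Icc hk hx, dmtLogInv, div_mul_cancel_left₀ (by positivity), log_inv, log_exp]
  field_simp
  ring

lemma dmt_dmtLogInv {k : ℕ} (hk : k < min Mt Mr) {b : ℝ}
    (hx : dmtLogInv Mt Mr k b ∈ Set.Icc (k : ℝ) (k + 1)) :
    dmt Mt Mr (dmtLogInv Mt Mr k b) = dmt Mt Mr (k + 1) + dmtSlope Mt Mr k * (k + 1)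
      * (1 - exp (-(b - dmtLog Mt Mr (k + 1)) / dmtSlope Mt Mr k)) := by
  rw [dmt_of_mem_Icc hk hx, dmtLogInv]
  ring

end Dmt

end DistortionExponent

open DistortionExponent in
theorem stmt_4_general (Mt Mr : ℕ) (b : ℝ) (hb : 0 < b)
    (dstar : ℝ → ℝ)
    (hd : ∀ k : ℕ, k < min Mt Mr → ∀ x ∈ Set.Icc (k : ℝ) ((k : ℝ) + 1),
      dstar x = ((Mt : ℝ) - k) * ((Mr : ℝ) - k)
        + (x - k) * (((Mt : ℝ) - (k + 1)) * ((Mr : ℝ) - (k + 1))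
          - ((Mt : ℝ) - k) * ((Mr : ℝ) - k)))
    (Δ : ℕ → ℝ)
    (hΔ : ∀ n, Δ n = sSup { v : ℝ | ∃ t r : ℕ → ℝ,
        (∀ i, 0 ≤ t i) ∧ (∑ i ∈ Finset.range n, t i) = 1 ∧
        (0 ≤ r 0) ∧ (∀ i j, i ≤ j → j < n → r i ≤ r j) ∧
        (∀ i < n, r i ≤ (min Mt Mr : ℝ)) ∧
        v = (Finset.range (n + 1)).inf' Finset.nonempty_range_add_one (fun k =>
          if k = n then b * ∑ i ∈ Finset.range n, t i * r i
          else dstar (r k) + b * ∑ i ∈ Finset.range k, t i * r i) })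
    (c : ℕ → ℝ) (hc0 : c 0 = 0)
    (hc : ∀ i : ℕ, 1 ≤ i → i ≤ min Mt Mr - 1 →
      c i = c (i - 1) + (|(Mr : ℝ) - (Mt : ℝ)| + 2 * (i : ℝ) - 1)
        * Real.log (((min Mt Mr : ℝ) - i + 1) / ((min Mt Mr : ℝ) - i)))
    (p : ℕ) (hp1 : 1 ≤ p) (hp2 : p ≤ min Mt Mr)
    (hbp1 : c (p - 1) ≤ b) (hbp2 : p < min Mt Mr → b < c p) :
    Tendsto Δ atTop (nhds
      ((∑ i ∈ Finset.range (p - 1), (|(Mr : ℝ) - (Mt : ℝ)| + 2 * ((i : ℝ) + 1) - 1))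
        + ((min Mt Mr : ℝ) - p + 1) * (|(Mr : ℝ) - (Mt : ℝ)| + 2 * (p : ℝ) - 1)
          * (1 - Real.exp (-(b - c (p - 1))
              / (|(Mr : ℝ) - (Mt : ℝ)| + 2 * (p : ℝ) - 1))))) := by
  simp only [← Nat.cast_min] at hc hΔ ⊢
  set k := min Mt Mr - p
  have hk : k < min Mt Mr := by omega
  have hk_cast : (k : ℝ) + 1 = (min Mt Mr - (p - 1) : ℕ) := by
    rw [show min Mt Mr - (p - 1) = k + 1 by omega]; push_cast; ring
  have hFk1 : dmtLog Mt Mr (k + 1) = c (p - 1) := by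
    rw [threshold_eq_dmtLog hc0 hc (by omega), hk_cast]
  have hx₀ := dmtLogInv_mem_Icc hk (hFk1.trans_le hbp1) fun hk0 => by
    rw [← threshold_eq_dmtLog hc0 hc (by omega)]; exact hbp2 (by omega)
  have hlimit : dmt Mt Mr (dmtLogInv Mt Mr k b) = (∑ i ∈ range (p - 1),
        (|(Mr : ℝ) - (Mt : ℝ)| + 2 * ((i : ℝ) + 1) - 1)) + (((min Mt Mr : ℕ) : ℝ) - p + 1)
        * (|(Mr : ℝ) - (Mt : ℝ)| + 2 * (p : ℝ) - 1)
        * (1 - exp (-(b - c (p - 1)) / (|(Mr : ℝ) - (Mt : ℝ)| + 2 * (p : ℝ) - 1))) := by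
    have hdk : dmt Mt Mr (k + 1) = ((Mt : ℝ) - (k + 1)) * ((Mr : ℝ) - (k + 1)) := by
      exact_mod_cast dmt_natCast (Mt := Mt) (Mr := Mr) (k := k + 1) hk
    have hk_real : (k : ℝ) = (min Mt Mr : ℕ) - p := Nat.cast_sub hp2
    rw [dmt_dmtLogInv hk hx₀, hFk1, dmtSlope_min_sub hp2, sum_range_add_odd, hdk, hk_real,
      Nat.cast_sub hp1, abs_sub_eq_add_sub_two_mul_min]
    linear_combination sub_min_mul_sub_min Mt Mr
  rw [← hlimit]
  refine (tendsto_sSup_lsExponents (fun _ _ => dmtLog_sub_le) (fun _ _ => div_le_dmtLog_sub)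
    dmt_antitone dmt_strictAntiOn continuous_dmt (eq_dmt_of_mem_Icc hd (by omega)) dmt_min
    dmtLog_min hb (by unfold dmtLogInv; positivity) (hx₀.2.trans (by exact_mod_cast hk))
    (dmtLog_dmtLogInv hk hx₀)).congr fun n => (hΔ n).symm

/-- The optimal distortion exponent of layered source coding with progressive
transmission (LS) over an `M_t × M_r` MIMO channel, in the limit of
infinitely many layers: with thresholds `c_0 = 0`,
`c_i = c_{i-1} + (|M_r - M_t| + 2i - 1) ln((M_* - i + 1)/(M_* - i))`
for `i = 1, …, M_* - 1` and `c_{M_*} = ∞`, and `p` the unique index with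
`c_{p-1} ≤ b < c_p`, the limit of `Δ n` equals
`Σ_{i=1}^{p-1}(|M_r - M_t| + 2i - 1)
  + (M_* - p + 1)(|M_r - M_t| + 2p - 1)(1 - e^{-(b - c_{p-1})/(|M_r-M_t|+2p-1)})`. -/
theorem stmt_4 (Mt Mr : ℕ) (hMt : 1 ≤ Mt) (hMr : 1 ≤ Mr) (b : ℝ) (hb : 0 < b)
    (dstar : ℝ → ℝ)
    (hd : ∀ k : ℕ, k < min Mt Mr → ∀ x ∈ Set.Icc (k : ℝ) ((k : ℝ) + 1),
      dstar x = ((Mt : ℝ) - k) * ((Mr : ℝ) - k)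
        + (x - k) * (((Mt : ℝ) - (k + 1)) * ((Mr : ℝ) - (k + 1))
          - ((Mt : ℝ) - k) * ((Mr : ℝ) - k)))
    (Δ : ℕ → ℝ)
    (hΔ : ∀ n, Δ n = sSup { v : ℝ | ∃ t r : ℕ → ℝ,
        (∀ i, 0 ≤ t i) ∧ (∑ i ∈ Finset.range n, t i) = 1 ∧
        (0 ≤ r 0) ∧ (∀ i j, i ≤ j → j < n → r i ≤ r j) ∧
        (∀ i < n, r i ≤ (min Mt Mr : ℝ)) ∧
        v = (Finset.range (n + 1)).inf' Finset.nonempty_range_add_one (fun k =>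
          if k = n then b * ∑ i ∈ Finset.range n, t i * r i
          else dstar (r k) + b * ∑ i ∈ Finset.range k, t i * r i) })
    (c : ℕ → ℝ) (hc0 : c 0 = 0)
    (hc : ∀ i : ℕ, 1 ≤ i → i ≤ min Mt Mr - 1 →
      c i = c (i - 1) + (|(Mr : ℝ) - (Mt : ℝ)| + 2 * (i : ℝ) - 1)
        * Real.log (((min Mt Mr : ℝ) - i + 1) / ((min Mt Mr : ℝ) - i)))
    (p : ℕ) (hp1 : 1 ≤ p) (hp2 : p ≤ min Mt Mr)
    (hbp1 : c (p - 1) ≤ b) (hbp2 : p < min Mt Mr → b < c p) :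
    Tendsto Δ atTop (nhds
      ((∑ i ∈ Finset.range (p - 1), (|(Mr : ℝ) - (Mt : ℝ)| + 2 * ((i : ℝ) + 1) - 1))
        + ((min Mt Mr : ℝ) - p + 1) * (|(Mr : ℝ) - (Mt : ℝ)| + 2 * (p : ℝ) - 1)
          * (1 - Real.exp (-(b - c (p - 1))
              / (|(Mr : ℝ) - (Mt : ℝ)| + 2 * (p : ℝ) - 1))))) :=
  stmt_4_general Mt Mr b hb dstar hd Δ hΔ c hc0 hc p hp1 hp2 hbp1 hbp2
end

section
/- Let M_t ≥ 1, M_r ≥ 1 be integers with min(M_t, M_r) = 1, let M^* = max(M_t, M_r), and let b > 0 be real. With d*(r) = M^*(1 − r) for r ∈ [0, 1] (the DMT curve of the MISO/SIMO channel), define for each n ≥ 1: Δ_n = sup over all t ∈ ℝ^n with t_i ≥ 0 and Σ_{i=1}^n t_i = 1 and all r ∈ ℝ^n with 0 ≤ r_1 ≤ ⋯ ≤ r_n ≤ 1, of min_{0 ≤ k ≤ n} { d*(r_{k+1}) + b·Σ_{i=1}^k t_i r_i } (where d*(r_{n+1}) is interpreted as 0). Then lim_{n→∞} Δ_n = M^*·(1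 − e^{−b/M^*}). -/
/-!
Write `M = M^*` and let `v` be the value of a feasible allocation. The constraint of layer `k`
says `M r_k ≤ M - v + b S_k`, where `S_k = ∑_{i<k} t_i r_i`; feeding it into
`S_{k+1} = S_k + t_k r_k` gives `M - v + b S_k ≤ (M - v) ∏_{i<k} (1 + (b/M) t_i)`. With the last
constraint `v ≤ b S_n` and `1 + x ≤ eˣ` this yields `M ≤ (M - v) e^{b/M}`, i.e.
`v ≤ M (1 - e^{-b/M})`, for every `n`. Conversely, equal time shares `t_i = 1/n` and geometric
rates `r_i = q^{i-n}` with `q = 1 + b/(Mn)` make all `n + 1` constraints equal to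
`M (1 - q^{-n})`, which tends to `M (1 - e^{-b/M})`.
-/

open Filter Finset Real

noncomputable def lsObjective (M b : ℝ) (n : ℕ) (t r : ℕ → ℝ) : ℝ :=
  (range (n + 1)).inf' nonempty_range_add_one (fun k =>
    if k = n then b * ∑ i ∈ range n, t i * r i
    else M * (1 - r k) + b * ∑ i ∈ range k, t i * r i)

def lsValues (M b : ℝ) (n : ℕ) : Set ℝ :=
  { v | ∃ t r : ℕ → ℝ, (∀ i, 0 ≤ t i) ∧ (∑ i ∈ range n, t i) = 1 ∧
      (0 ≤ r 0) ∧ (∀ i j, i ≤ j → j < n → r i ≤ r j) ∧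
      (∀ i < n, r i ≤ 1) ∧ v = lsObjective M b n t r }

section

variable {M b : ℝ} {n : ℕ} {t r : ℕ → ℝ}

lemma lsObjective_le_of_lt {k : ℕ} (hk : k < n) :
    lsObjective M b n t r ≤ M * (1 - r k) + b * ∑ i ∈ range k, t i * r i := by
  refine (inf'_le _ (mem_range.2 (hk.trans n.lt_succ_self))).trans_eq ?_
  simp [hk.ne]

lemma lsObjective_le_last : lsObjective M b n t r ≤ b * ∑ i ∈ range n, t i * r i := by
  refine (inf'_le _ (self_mem_range_succ n)).trans_eq ?_
  simp

lemma sub_add_mul_sum_le_mul_prod (hM : 0 < M) (hb : 0 ≤ b) (ht : ∀ i, 0 ≤ t i) {v : ℝ}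
    (hv : ∀ k < n, v ≤ M * (1 - r k) + b * ∑ i ∈ range k, t i * r i) :
    M - v + b * ∑ i ∈ range n, t i * r i ≤ (M - v) * ∏ i ∈ range n, (1 + b / M * t i) := by
  induction n with
  | zero => simp
  | succ n ih =>
    have ih := ih fun k hk => hv k (hk.trans n.lt_succ_self)
    have hrn : M * r n ≤ M - v + b * ∑ i ∈ range n, t i * r i := by
      linarith [hv n n.lt_succ_self]
    have hbt : 0 ≤ b / M * t n := mul_nonneg (div_nonneg hb hM.le) (ht n)
    rw [sum_range_succ, prod_range_succ]
    calc M - v + b * (∑ i ∈ range n, t i * r i + t n * r n)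
        = (M - v + b * ∑ i ∈ range n, t i * r i) + b / M * t n * (M * r n) := by
          field_simp
          ring
      _ ≤ (M - v) * ∏ i ∈ range n, (1 + b / M * t i)
          + b / M * t n * ((M - v) * ∏ i ∈ range n, (1 + b / M * t i)) :=
          add_le_add ih (mul_le_mul_of_nonneg_left (hrn.trans ih) hbt)
      _ = (M - v) * ((∏ i ∈ range n, (1 + b / M * t i)) * (1 + b / M * t n)) := by ring

lemma lsObjective_le (hM : 0 < M) (hb : 0 ≤ b) (ht : ∀ i, 0 ≤ t i)
    (hts : ∑ i ∈ range n, t i = 1) :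
    lsObjective M b n t r ≤ M * (1 - exp (-(b / M))) := by
  set v := lsObjective M b n t r
  have hbt : ∀ i, 0 ≤ b / M * t i := fun i => mul_nonneg (div_nonneg hb hM.le) (ht i)
  have hgrowth : M ≤ (M - v) * ∏ i ∈ range n, (1 + b / M * t i) := by
    linarith [sub_add_mul_sum_le_mul_prod hM hb ht (v := v) (fun k hk => lsObjective_le_of_lt hk),
      (lsObjective_le_last : v ≤ _)]
  have hprod : ∏ i ∈ range n, (1 + b / M * t i) ≤ exp (b / M) := by
    simpa [← mul_sum, hts] using prod_one_add_le_exp_sum (range n) hbt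
  have hprod_pos : 0 < ∏ i ∈ range n, (1 + b / M * t i) :=
    prod_pos fun i _ => by linarith [hbt i]
  have hv : 0 < M - v := by nlinarith
  have hexp := mul_le_mul_of_nonneg_right (hgrowth.trans (mul_le_mul_of_nonneg_left hprod hv.le))
    (exp_pos (-(b / M))).le
  rw [mul_assoc, ← exp_add, add_neg_cancel, exp_zero, mul_one] at hexp
  linarith

lemma lsObjective_geometric (hM : 0 < M) (hb : 0 ≤ b) (hn : 0 < n) :
    lsObjective M b n (fun _ => (n : ℝ)⁻¹)
        (fun i => (1 + b / M / n) ^ i / (1 + b / M / n) ^ n) =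
      M * (1 - ((1 + b / M / n) ^ n)⁻¹) := by
  set q := 1 + b / M / n
  have hn' : (0 : ℝ) < n := by exact_mod_cast hn
  have hqn : q ^ n ≠ 0 := (pow_pos (by positivity) n).ne'
  have hstep : b / n = M * (q - 1) := by
    simp only [q]
    field_simp
    ring
  have hpartial (k : ℕ) :
      b * ∑ i ∈ range k, (n : ℝ)⁻¹ * (q ^ i / q ^ n) = M * (q ^ k - 1) / q ^ n := by
    rw [← mul_sum, ← sum_div, ← geom_sum_mul]
    linear_combination (∑ i ∈ range k, q ^ i) / q ^ n * hstep
  unfold lsObjective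
  rw [inf'_congr _ rfl (g := fun _ => M * (1 - (q ^ n)⁻¹)), inf'_const]
  intro k _
  split_ifs
  · rw [hpartial]
    field_simp
  · rw [hpartial]
    field_simp
    ring

lemma mul_one_sub_inv_pow_mem_lsValues (hM : 0 < M) (hb : 0 ≤ b) (hn : 0 < n) :
    M * (1 - ((1 + b / M / n) ^ n)⁻¹) ∈ lsValues M b n := by
  have hq : 1 ≤ 1 + b / M / n := le_add_of_nonneg_right (by positivity)
  have hqn : 0 < (1 + b / M / n) ^ n := pow_pos (by linarith) n
  refine ⟨_, _, fun _ => by positivity, ?_, by positivity, ?_, ?_,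
    (lsObjective_geometric hM hb hn).symm⟩
  · simp [hn.ne']
  · exact fun i j hij _ => div_le_div_of_nonneg_right (pow_le_pow_right₀ hq hij) hqn.le
  · exact fun i hi => (div_le_one hqn).2 (pow_le_pow_right₀ hq hi.le)

lemma mul_one_sub_exp_mem_upperBounds_lsValues (hM : 0 < M) (hb : 0 ≤ b) :
    M * (1 - exp (-(b / M))) ∈ upperBounds (lsValues M b n) := by
  rintro _ ⟨t, r, ht, hts, -, -, -, rfl⟩
  exact lsObjective_le hM hb ht hts

end

lemma tendsto_mul_one_sub_inv_one_add_div_pow (M c : ℝ) :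
    Tendsto (fun n : ℕ => M * (1 - ((1 + c / n) ^ n)⁻¹)) atTop (nhds (M * (1 - exp (-c)))) := by
  have h := (tendsto_one_add_div_pow_exp c).inv₀ (exp_ne_zero c)
  rw [← exp_neg] at h
  exact (tendsto_const_nhds.sub h).const_mul M

theorem stmt_5_general (Mt Mr : ℕ) (hMt : 1 ≤ Mt)
    (b : ℝ) (hb : 0 < b) (Δ : ℕ → ℝ)
    (hΔ : ∀ n, Δ n = sSup { v : ℝ | ∃ t r : ℕ → ℝ,
        (∀ i, 0 ≤ t i) ∧ (∑ i ∈ Finset.range n, t i) = 1 ∧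
        (0 ≤ r 0) ∧ (∀ i j, i ≤ j → j < n → r i ≤ r j) ∧
        (∀ i < n, r i ≤ 1) ∧
        v = (Finset.range (n + 1)).inf' Finset.nonempty_range_add_one (fun k =>
          if k = n then b * ∑ i ∈ Finset.range n, t i * r i
          else (max Mt Mr : ℝ) * (1 - r k) + b * ∑ i ∈ Finset.range k, t i * r i) }) :
    Tendsto Δ atTop
      (nhds ((max Mt Mr : ℝ) * (1 - Real.exp (-b / (max Mt Mr : ℝ))))) := by
  set M : ℝ := max Mt Mr
  have hM : 0 < M := by
    have : (1 : ℝ) ≤ Mt := by exact_mod_cast hMt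
    exact one_pos.trans_le (this.trans (le_max_left _ _))
  have hΔ' : ∀ n, Δ n = sSup (lsValues M b n) := hΔ
  have hupper := fun n => mul_one_sub_exp_mem_upperBounds_lsValues (n := n) hM hb.le
  rw [neg_div]
  refine tendsto_of_tendsto_of_tendsto_of_le_of_le'
    (tendsto_mul_one_sub_inv_one_add_div_pow M (b / M)) tendsto_const_nhds ?_ ?_
  · filter_upwards [eventually_gt_atTop 0] with n hn
    rw [hΔ' n]
    exact le_csSup ⟨_, hupper n⟩ (mul_one_sub_inv_pow_mem_lsValues hM hb.le hn)
  · filter_upwards [eventually_gt_atTop 0] with n hn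
    rw [hΔ' n]
    exact csSup_le ⟨_, mul_one_sub_inv_pow_mem_lsValues hM hb.le hn⟩ (hupper n)

/-- For a MISO/SIMO channel (`min(M_t, M_r) = 1`) with DMT curve
`d*(r) = M^*(1 - r)` on `[0, 1]`, the `n`-layer LS distortion exponent `Δ n`
converges, as `n → ∞`, to `M^*(1 - e^{-b/M^*})` where `M^* = max(M_t, M_r)`. -/
theorem stmt_5 (Mt Mr : ℕ) (hMt : 1 ≤ Mt) (hMr : 1 ≤ Mr) (hmin : min Mt Mr = 1)
    (b : ℝ) (hb : 0 < b) (Δ : ℕ → ℝ)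
    (hΔ : ∀ n, Δ n = sSup { v : ℝ | ∃ t r : ℕ → ℝ,
        (∀ i, 0 ≤ t i) ∧ (∑ i ∈ Finset.range n, t i) = 1 ∧
        (0 ≤ r 0) ∧ (∀ i j, i ≤ j → j < n → r i ≤ r j) ∧
        (∀ i < n, r i ≤ 1) ∧
        v = (Finset.range (n + 1)).inf' Finset.nonempty_range_add_one (fun k =>
          if k = n then b * ∑ i ∈ Finset.range n, t i * r i
          else (max Mt Mr : ℝ) * (1 - r k) + b * ∑ i ∈ Finset.range k, t i * r i) }) :
    Tendsto Δ atTop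
      (nhds ((max Mt Mr : ℝ) * (1 - Real.exp (-b / (max Mt Mr : ℝ))))) :=
  stmt_5_general Mt Mr hMt b hb Δ hΔ
end

section
/- Let M ≥ 1 be a real number (M = M^*, the number of antennas), b ≥ 1 real, and n ≥ 1 an integer. Define real numbers d_{n+1}, d_n, …, d_1 recursively by d_{n+1} = 1 and d_i = M·((b−1)/n + d_{i+1})/(M + (b−1)/n) for i = n, n−1, …, 1 (the staircase recursion of n lines of common slope (b−1)/n against the line y = M(1 − x), started at height 1). Then d_1 = M − (M − 1)·(1 + (b−1)/(n·M))^{−n}. -/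
/-! The recursion is affine with fixed point `M`: each step multiplies the distance to `M` by
`q = M / (M + (b-1)/n) = (1 + (b-1)/(nM))⁻¹`, so after `n` steps from `d_{n+1} = 1` we get
`d_1 - M = qⁿ (1 - M)`. -/

theorem eq_pow_mul_of_forall_eq_mul_succ {R : Type*} [Monoid R] (e : ℕ → R) (q : R) (n m : ℕ)
    (h : ∀ i, m ≤ i → i < m + n → e i = q * e (i + 1)) :
    e m = q ^ n * e (m + n) := by
  induction n generalizing m with
  | zero => simp
  | succ n ih =>
    have hrest : e (m + 1) = q ^ n * e (m + 1 + n) :=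
      ih (m + 1) fun i hi hin => h i (by omega) (by omega)
    rw [h m le_rfl (by omega), hrest, pow_succ', mul_assoc, Nat.add_right_comm, add_assoc]

theorem sub_eq_mul_sub_of_eq_div {K : Type*} [Field K] {M c x y : K} (hMc : M + c ≠ 0)
    (hy : y = M * (c + x) / (M + c)) :
    y - M = M / (M + c) * (x - M) := by
  rw [hy]
  field_simp
  ring

theorem inv_one_add_div_eq_div_add {K : Type*} [Field K] {M c : K} (hM : M ≠ 0) :
    (1 + c / M)⁻¹ = M / (M + c) := by
  rw [one_add_div hM, inv_div]

theorem stmt_6_general (M b : ℝ) (hM : 1 ≤ M) (hb : 1 ≤ b) (n : ℕ)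
    (d : ℕ → ℝ) (hend : d (n + 1) = 1)
    (hrec : ∀ i, 1 ≤ i → i ≤ n →
      d i = M * ((b - 1) / n + d (i + 1)) / (M + (b - 1) / n)) :
    d 1 = M - (M - 1) * ((1 + (b - 1) / (n * M)) ^ n)⁻¹ := by
  set c : ℝ := (b - 1) / n
  have hM0 : 0 < M := by linarith
  have hc : 0 ≤ c := div_nonneg (by linarith) n.cast_nonneg
  have hMc : M + c ≠ 0 := by positivity
  have hgeom : d 1 - M = (M / (M + c)) ^ n * (d (1 + n) - M) :=
    eq_pow_mul_of_forall_eq_mul_succ (fun i => d i - M) _ n 1 fun i hi hin =>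
      sub_eq_mul_sub_of_eq_div hMc (hrec i hi (by omega))
  rw [add_comm 1 n, hend] at hgeom
  rw [← div_div, ← inv_pow, inv_one_add_div_eq_div_add hM0.ne']
  linarith

/-- Closed form for the HLS staircase recursion: `n` lines of common slope
`(b-1)/n` climbing the DMT line `y = M(1 - x)` starting from height
`d_{n+1} = 1` (the analog layer's diversity offset) yield
`d_1 = M - (M-1)(1 + (b-1)/(nM))^{-n}`. -/
theorem stmt_6 (M b : ℝ) (hM : 1 ≤ M) (hb : 1 ≤ b) (n : ℕ) (hn : 1 ≤ n)
    (d : ℕ → ℝ) (hend : d (n + 1) = 1)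
    (hrec : ∀ i, 1 ≤ i → i ≤ n →
      d i = M * ((b - 1) / n + d (i + 1)) / (M + (b - 1) / n)) :
    d 1 = M - (M - 1) * ((1 + (b - 1) / (n * M)) ^ n)⁻¹ :=
  stmt_6_general M b hM hb n d hend hrec
end

section
/- Let m ≥ 1 be an integer. The infimum over all β ∈ ℝ^m with β_i ≥ 0 for all i of the quantity max(1 − max_{1 ≤ i ≤ m} β_i, 0) + Σ_{i=1}^m (2i − 1)·β_i equals 1, and the infimum is attained (e.g., at β = 0). -/
/-- The SNR exponent of the analog layer's contribution in HLS: the infimum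
over nonnegative `β ∈ ℝ^m` of `(1 - max_i β_i)^+ + Σ_i (2i - 1) β_i` equals
`1`, and it is attained. -/
theorem stmt_10 (m : ℕ) (hm : 1 ≤ m) :
    IsLeast
      { y : ℝ | ∃ β : Fin m → ℝ, (∀ i, 0 ≤ β i) ∧
          y = max (1 - Finset.univ.sup' (Finset.univ_nonempty_iff.mpr ⟨⟨0, hm⟩⟩) β) 0
            + ∑ i : Fin m, (2 * ((i : ℕ) : ℝ) + 1) * β i }
      1 := by
  constructor
  · refine ⟨fun _ => 0, fun _ => le_refl 0, ?_⟩
    simp [Finset.sup'_const]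
  · rintro y ⟨β, hβ, rfl⟩
    obtain ⟨j, -, hj⟩ := Finset.exists_mem_eq_sup' (Finset.univ_nonempty_iff.mpr ⟨⟨0, hm⟩⟩) β
    have hsum : β j ≤ ∑ i : Fin m, (2 * ((i : ℕ) : ℝ) + 1) * β i := by
      have h1 : β j ≤ (2 * ((j : ℕ) : ℝ) + 1) * β j := by
        nlinarith [hβ j, (j : ℕ).cast_nonneg (α := ℝ)]
      refine h1.trans (Finset.single_le_sum (f := fun i : Fin m => (2 * ((i : ℕ) : ℝ) + 1) * β i) ?_ (Finset.mem_univ j))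
      intro i _
      have : (0:ℝ) ≤ 2 * ((i : ℕ) : ℝ) + 1 := by positivity
      exact mul_nonneg this (hβ i)
    have h2 : 1 - β j ≤ max (1 - Finset.univ.sup' (Finset.univ_nonempty_iff.mpr ⟨⟨0, hm⟩⟩) β) 0 := by
      rw [← hj]; exact le_max_left _ _
    linarith
end

section
/- Let m ≥ 1 be an integer, a ≥ 0 an integer, and let s, r be real numbers with 0 < r ≤ s. Write (x)^+ = max(x, 0). Then the infimum over all α ∈ ℝ^m satisfying α_1 ≥ α_2 ≥ ⋯ ≥ α_m ≥ 0 and Σ_{i=1}^m [ (s − α_i)^+ − (s − r − α_i)^+ ] < r, of the quantity Σ_{i=1}^m (a + 2i − 1)·α_i, equals (m·a + m²)·s − (a + 2m − 1)·r. -/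
open Finset

lemma sumc_aux (a : ℕ) (m : ℕ) :
    (∑ i : Fin m, ((a:ℝ) + 2*((i:ℕ):ℝ) + 1)) = m*a + m^2 := by
  induction m with
  | zero => simp
  | succ n ih =>
    rw [Fin.sum_univ_castSucc]
    simp only [Fin.coe_castSucc, Fin.val_last]
    rw [ih]
    push_cast
    ring

/-- The optimization underlying the successive decoding diversity gain of the
broadcast strategy: for `0 < r ≤ s`, the infimum of
`Σ_{i=1}^m (a + 2i - 1) α_i` over nonincreasing nonnegative `α` with
`Σ_i [(s - α_i)^+ - (s - r - α_i)^+] < r` equals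
`(ma + m²)s - (a + 2m - 1)r`. -/
theorem stmt_11 (m : ℕ) (hm : 1 ≤ m) (a : ℕ) (s r : ℝ)
    (hr : 0 < r) (hrs : r ≤ s) :
    IsGLB
      { y : ℝ | ∃ α : Fin m → ℝ,
          (∀ i j : Fin m, i ≤ j → α j ≤ α i) ∧ (∀ i, 0 ≤ α i) ∧
          (∑ i : Fin m, (max (s - α i) 0 - max (s - r - α i) 0)) < r ∧
          y = ∑ i : Fin m, ((a : ℝ) + 2 * ((i : ℕ) : ℝ) + 1) * α i }
      (((m : ℝ) * a + (m : ℝ) ^ 2) * s - ((a : ℝ) + 2 * m - 1) * r) := by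
  have hm' : (1:ℝ) ≤ (m:ℝ) := by exact_mod_cast hm
  have ha : (0:ℝ) ≤ (a:ℝ) := Nat.cast_nonneg a
  set C : ℝ := (a:ℝ) + 2*(m:ℝ) - 1 with hC
  have hCpos : 0 < C := by rw [hC]; linarith
  constructor
  · -- lower bound
    rintro y ⟨α, hmono, hpos, hcon, rfl⟩
    have hf0 : ∀ i, 0 ≤ max (s - α i) 0 - max (s - r - α i) 0 := by
      intro i
      have : max (s - r - α i) 0 ≤ max (s - α i) 0 :=
        max_le_max (by linarith) le_rfl
      linarith
    have hlt : ∀ i, max (s - α i) 0 - max (s - r - α i) 0 < r := by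
      intro i
      exact lt_of_le_of_lt
        (Finset.single_le_sum (fun j _ => hf0 j) (mem_univ i)) hcon
    have hgt : ∀ i, s - r < α i := by
      intro i
      by_contra h
      push_neg at h
      have h1 : max (s - α i) 0 = s - α i := max_eq_left (by linarith)
      have h2 : max (s - r - α i) 0 = s - r - α i := max_eq_left (by linarith)
      have := hlt i
      rw [h1, h2] at this
      linarith
    have hfi : ∀ i, max (s - α i) 0 - max (s - r - α i) 0 = max (s - α i) 0 := by
      intro i
      have : max (s - r - α i) 0 = 0 := max_eq_right (by have := hgt i; linarith)
      rw [this]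
      ring
    have hS : (∑ i : Fin m, max (s - α i) 0) < r := by
      rw [show (∑ i : Fin m, max (s - α i) 0)
          = ∑ i : Fin m, (max (s - α i) 0 - max (s - r - α i) 0) from
        Finset.sum_congr rfl (fun i _ => (hfi i).symm)]
      exact hcon
    have key : ∀ i : Fin m,
        ((a:ℝ) + 2*((i:ℕ):ℝ) + 1)*s - C * (max (s - α i) 0)
          ≤ ((a:ℝ) + 2*((i:ℕ):ℝ) + 1) * α i := by
      intro i
      have hi1 : ((i:ℕ):ℝ) + 1 ≤ (m:ℝ) := by exact_mod_cast i.isLt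
      have hi0 : (0:ℝ) ≤ ((i:ℕ):ℝ) := Nat.cast_nonneg _
      have hc : (0:ℝ) < (a:ℝ) + 2*((i:ℕ):ℝ) + 1 := by linarith
      have hcC : (a:ℝ) + 2*((i:ℕ):ℝ) + 1 ≤ C := by rw [hC]; linarith
      rcases le_or_gt (s - α i) 0 with h | h
      · rw [max_eq_right h]
        nlinarith
      · rw [max_eq_left h.le]
        nlinarith
    have sum1 : (∑ i : Fin m, (((a:ℝ) + 2*((i:ℕ):ℝ) + 1)*s - C * max (s - α i) 0))
        ≤ ∑ i : Fin m, ((a:ℝ) + 2*((i:ℕ):ℝ) + 1) * α i :=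
      Finset.sum_le_sum (fun i _ => key i)
    have sum2 : (∑ i : Fin m, (((a:ℝ) + 2*((i:ℕ):ℝ) + 1)*s - C * max (s - α i) 0))
        = ((m:ℝ)*a + (m:ℝ)^2)*s - C * (∑ i : Fin m, max (s - α i) 0) := by
      rw [Finset.sum_sub_distrib, ← Finset.sum_mul, sumc_aux a m, ← Finset.mul_sum]
    rw [sum2] at sum1
    have : C * (∑ i : Fin m, max (s - α i) 0) ≤ C * r :=
      mul_le_mul_of_nonneg_left hS.le hCpos.le
    linarith
  · -- greatest lower bound
    rintro b hb
    apply le_of_forall_pos_le_add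
    intro ε hε
    set δ : ℝ := min (ε/C) (r/2) with hδ
    have hδpos : 0 < δ := lt_min (div_pos hε hCpos) (by linarith)
    have hδr : δ < r := lt_of_le_of_lt (min_le_right _ _) (by linarith)
    have hδε : C * δ ≤ ε := by
      have : δ ≤ ε / C := min_le_left _ _
      calc C * δ ≤ C * (ε / C) := mul_le_mul_of_nonneg_left this hCpos.le
        _ = ε := by field_simp
    set last : Fin m := ⟨m - 1, by omega⟩ with hlast
    set α : Fin m → ℝ := fun i => if i = last then s - r + δ else s with hα
    have hmem : (∑ i : Fin m, ((a:ℝ) + 2*((i:ℕ):ℝ) + 1) * α i) ∈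
        { y : ℝ | ∃ α : Fin m → ℝ,
          (∀ i j : Fin m, i ≤ j → α j ≤ α i) ∧ (∀ i, 0 ≤ α i) ∧
          (∑ i : Fin m, (max (s - α i) 0 - max (s - r - α i) 0)) < r ∧
          y = ∑ i : Fin m, ((a : ℝ) + 2 * ((i : ℕ) : ℝ) + 1) * α i } := by
      refine ⟨α, ?_, ?_, ?_, rfl⟩
      · intro i j hij
        by_cases hj : j = last
        · by_cases hi : i = last
          · simp [hα, hi, hj]
          · simp only [hα, hi, hj, if_true, if_false, if_pos, if_neg hi]
            linarith
        · have hi : i ≠ last := by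
            intro h
            apply hj
            have hij' : (i:ℕ) ≤ (j:ℕ) := hij
            have hjlt : (j:ℕ) < m := j.isLt
            have hiv : (i:ℕ) = m - 1 := by rw [h]
            exact Fin.ext (by omega)
          simp [hα, hi, hj]
      · intro i
        by_cases hi : i = last <;> simp [hα, hi] <;> linarith
      · have hz : ∀ i ∈ (univ : Finset (Fin m)), i ≠ last →
            max (s - α i) 0 - max (s - r - α i) 0 = 0 := by
          intro i _ hi
          simp only [hα, if_neg hi]
          rw [sub_self, max_self, max_eq_right (by linarith : s - r - s ≤ 0)]
          ring
        rw [Finset.sum_eq_single_of_mem last (mem_univ last) hz]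
        simp only [hα, if_pos rfl]
        rw [max_eq_left (by linarith : (0:ℝ) ≤ s - (s - r + δ)),
            max_eq_right (by linarith : s - r - (s - r + δ) ≤ 0)]
        linarith
    have hb' := hb hmem
    have hval : (∑ i : Fin m, ((a:ℝ) + 2*((i:ℕ):ℝ) + 1) * α i)
        = ((m:ℝ)*a + (m:ℝ)^2)*s - C*r + C*δ := by
      have hsplit : (∑ i : Fin m, ((a:ℝ) + 2*((i:ℕ):ℝ) + 1) * α i)
          = (∑ i : Fin m, ((a:ℝ) + 2*((i:ℕ):ℝ) + 1) * s)
            + ∑ i : Fin m, ((a:ℝ) + 2*((i:ℕ):ℝ) + 1) * (α i - s) := by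
        rw [← Finset.sum_add_distrib]
        apply Finset.sum_congr rfl
        intro i _
        ring
      have hz : ∀ i ∈ (univ : Finset (Fin m)), i ≠ last →
          ((a:ℝ) + 2*((i:ℕ):ℝ) + 1) * (α i - s) = 0 := by
        intro i _ hi
        simp [hα, if_neg hi]
      have hlastv : ((last:ℕ):ℝ) = (m:ℝ) - 1 := by
        have : ((last:ℕ)) = m - 1 := rfl
        rw [this, Nat.cast_sub hm]
        norm_num
      rw [hsplit, ← Finset.sum_mul, sumc_aux a m,
          Finset.sum_eq_single_of_mem last (mem_univ last) hz]
      simp only [hα, if_pos rfl]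
      rw [hlastv, hC]
      ring
    rw [hval] at hb'
    linarith
end

section
/- Let M_t ≥ 1, M_r ≥ 1 be integers, n ≥ 1 an integer, and b real with (M_t − 1)(M_r − 1) ≤ b < M_t·M_r and b > 0. Set P = M_t·M_r, Q = M_t + M_r − 1, η = (b − (M_t − 1)(M_r − 1))/Q (so 0 ≤ η < 1), r_1 = P(1 − η)/(P − b·η^n), and r_i = η^{i−1}·r_1 for i = 1, …, n. Let S_i = Σ_{j=1}^i r_j and d_i = P(1 − S_{i−1}) − Q·r_i for i = 1, …, n. Define E_i = d_{i+1} + b·S_i for i = 0, 1, …, n−1 and E_n = b·S_n. Then E_0 = E_1 = ⋯ = E_n = b·P·(1 − η^n)/(P − b·η^n), and moreover S_n = P(1 − η^n)/(P − b·η^n) ≤ 1. -/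
/-!
With `P - Q = (M_t - 1)(M_r - 1)`, the ratio `η` is chosen so that `Q η = b - P + Q`.
The partial sums of the geometric allocation are `S_i = P(1 - η^i)/D` with `D = P - bη^n`,
so `D · (d_{i+1} + b S_i) = P (D - P + b) + P η^i (Qη - (b - P + Q))`: the dependence on `i`
cancels exactly, and the normalisation `D` of `r_1` makes the last exponent `b S_n` agree too.
-/

open Finset

theorem sum_range_pow_mul_div {K : Type*} [Field K] (c D η : K) (i : ℕ) :
    ∑ j ∈ range i, η ^ j * (c * (1 - η) / D) = c * (1 - η ^ i) / D := by
  rw [← sum_mul, ← mul_div_assoc, mul_left_comm, geom_sum_mul_neg]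

theorem geometric_allocation_exponent_eq {K : Type*} [Field K] {P Q b η : K} {n : ℕ}
    (hQη : Q * η = b - P + Q) (hD : P - b * η ^ n ≠ 0) (i : ℕ) :
    P * (1 - P * (1 - η ^ i) / (P - b * η ^ n))
        - Q * (η ^ i * (P * (1 - η) / (P - b * η ^ n)))
        + b * (P * (1 - η ^ i) / (P - b * η ^ n))
      = b * P * (1 - η ^ n) / (P - b * η ^ n) := by
  field_simp
  linear_combination (η ^ i) * P * hQη

theorem geometric_ratio_mem_Ico {P Q b η : ℝ} (hQ : 0 < Q) (hb1 : P - Q ≤ b) (hb2 : b < P)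
    (hη : η = (b - (P - Q)) / Q) :
    0 ≤ η ∧ η < 1 ∧ Q * η = b - P + Q := by
  have hQη : Q * η = b - P + Q := by rw [hη]; field_simp; ring
  refine ⟨?_, ?_, hQη⟩
  · rw [hη]; exact div_nonneg (by linarith) hQ.le
  · nlinarith

theorem geometric_partial_sum_le_one {P b η : ℝ} {n : ℕ} (hη : 0 ≤ η) (hbP : b ≤ P)
    (hD : 0 < P - b * η ^ n) :
    P * (1 - η ^ n) / (P - b * η ^ n) ≤ 1 := by
  rw [div_le_one hD]
  nlinarith [mul_le_mul_of_nonneg_right hbP (pow_nonneg hη n)]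

theorem stmt_12_general (Mt Mr n : ℕ) (hMt : 1 ≤ Mt) (hMr : 1 ≤ Mr)
    (b : ℝ)
    (hb1 : ((Mt : ℝ) - 1) * ((Mr : ℝ) - 1) ≤ b) (hb2 : b < (Mt : ℝ) * Mr)
    (P Q η r1 : ℝ) (r S E : ℕ → ℝ)
    (hP : P = (Mt : ℝ) * Mr) (hQ : Q = (Mt : ℝ) + Mr - 1)
    (hη : η = (b - ((Mt : ℝ) - 1) * ((Mr : ℝ) - 1)) / Q)
    (hr1 : r1 = P * (1 - η) / (P - b * η ^ n))
    -- `r i` is the multiplexing gain of layer `i+1`: `r_{i+1} = η^i r_1`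
    (hr : ∀ i, r i = η ^ i * r1)
    (hS : ∀ i, S i = ∑ j ∈ Finset.range i, r j)
    -- `E i = d_{i+1} + b S_i` for `i < n`, with
    -- `d_{i+1} = P(1 - S_i) - Q r_{i+1}`, and `E n = b S_n`
    (hE : ∀ i, E i = if i = n then b * S n else P * (1 - S i) - Q * r i + b * S i) :
    (∀ i ≤ n, E i = b * P * (1 - η ^ n) / (P - b * η ^ n)) ∧
    S n = P * (1 - η ^ n) / (P - b * η ^ n) ∧ S n ≤ 1 := by
  have hMt1 : (1 : ℝ) ≤ Mt := by exact_mod_cast hMt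
  have hMr1 : (1 : ℝ) ≤ Mr := by exact_mod_cast hMr
  have hPQ : P - Q = ((Mt : ℝ) - 1) * ((Mr : ℝ) - 1) := by rw [hP, hQ]; ring
  have hb0 : 0 ≤ b := le_trans (mul_nonneg (by linarith) (by linarith)) hb1
  rw [← hPQ] at hη hb1
  rw [← hP] at hb2
  obtain ⟨hη0, hη1, hQη⟩ := geometric_ratio_mem_Ico (by rw [hQ]; linarith) hb1 hb2 hη
  have hD : 0 < P - b * η ^ n := by
    nlinarith [mul_le_of_le_one_right hb0 (pow_le_one₀ (n := n) hη0 hη1.le)]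
  have hSi : ∀ i, S i = P * (1 - η ^ i) / (P - b * η ^ n) := fun i => by
    simp only [hS, hr, hr1, sum_range_pow_mul_div]
  refine ⟨fun i _ => ?_, hSi n, hSi n ▸ geometric_partial_sum_le_one hη0 hb2.le hD⟩
  rw [hE]
  split_ifs
  · rw [hSi]; ring
  · rw [hSi, hr, hr1]; exact geometric_allocation_exponent_eq hQη hD.ne' i

/-- The geometric multiplexing-gain allocation for `n`-layer BS over a
single-block `M_t × M_r` MIMO channel at bandwidth ratio
`(M_t-1)(M_r-1) ≤ b < M_t M_r` equalizes all `n+1` SNR exponents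
`E_0 = ⋯ = E_n = bP(1 - η^n)/(P - bη^n)`, and the total multiplexing gain
satisfies `S_n = P(1 - η^n)/(P - bη^n) ≤ 1`. -/
theorem stmt_12 (Mt Mr n : ℕ) (hMt : 1 ≤ Mt) (hMr : 1 ≤ Mr) (hn : 1 ≤ n)
    (b : ℝ) (hb0 : 0 < b)
    (hb1 : ((Mt : ℝ) - 1) * ((Mr : ℝ) - 1) ≤ b) (hb2 : b < (Mt : ℝ) * Mr)
    (P Q η r1 : ℝ) (r S E : ℕ → ℝ)
    (hP : P = (Mt : ℝ) * Mr) (hQ : Q = (Mt : ℝ) + Mr - 1)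
    (hη : η = (b - ((Mt : ℝ) - 1) * ((Mr : ℝ) - 1)) / Q)
    (hr1 : r1 = P * (1 - η) / (P - b * η ^ n))
    -- `r i` is the multiplexing gain of layer `i+1`: `r_{i+1} = η^i r_1`
    (hr : ∀ i, r i = η ^ i * r1)
    (hS : ∀ i, S i = ∑ j ∈ Finset.range i, r j)
    -- `E i = d_{i+1} + b S_i` for `i < n`, with
    -- `d_{i+1} = P(1 - S_i) - Q r_{i+1}`, and `E n = b S_n`
    (hE : ∀ i, E i = if i = n then b * S n else P * (1 - S i) - Q * r i + b * S i) :
    (∀ i ≤ n, E i = b * P * (1 - η ^ n) / (P - b * η ^ n)) ∧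
    S n = P * (1 - η ^ n) / (P - b * η ^ n) ∧ S n ≤ 1 :=
  stmt_12_general Mt Mr n hMt hMr b hb1 hb2 P Q η r1 r S E hP hQ hη hr1 hr hS hE
end

section
/- Let M_t ≥ 1, M_r ≥ 1 be integers, n ≥ 1 an integer, and b real with b ≥ M_t·M_r. Set P = M_t·M_r, Q = M_t + M_r − 1, and r_i = P/(n·P + Q) for i = 1, …, n. Let S_i = Σ_{j=1}^i r_j and define E_i = P(1 − S_i) − Q·r_{i+1} + b·S_i for i = 0, 1, …, n−1 and E_n = b·S_n. Then S_n < 1 and min_{0 ≤ i ≤ n} E_i = E_0 = n·P²/(n·P + Q). -/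
/-!
With the common gain `ρ = P/(nP + Q)` we have `S_i = iρ` and `(nP + Q)ρ = P`, so every exponent
is `E_i = nPρ + (b - P)·iρ` (for `i < n` this uses `P - Qρ = nPρ`, for `i = n` it is `b·nρ`).
Since `b ≥ P` the minimum is attained at `i = 0`, and `nρ < 1` because `Qρ > 0`.
-/

section EqualGains

variable {P Q ρ : ℝ} {n : ℕ}

lemma exponent_eq_of_equal_gains (b : ℝ) (i : ℕ) (hρ : (n * P + Q) * ρ = P) :
    (if i = n then b * (n * ρ) else P * (1 - i * ρ) - Q * ρ + b * (i * ρ)) =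
      n * P * ρ + (b - P) * (i * ρ) := by
  split_ifs with hi
  · subst hi; ring
  · linear_combination -hρ

lemma nat_mul_lt_one_of_equal_gains (hρ : (n * P + Q) * ρ = P) (hP : 0 < P) (hQρ : 0 < Q * ρ) :
    n * ρ < 1 := by
  refine lt_of_mul_lt_mul_right ?_ hP.le
  linear_combination hρ + hQρ

end EqualGains

theorem stmt_13_general (Mt Mr n : ℕ) (hMt : 1 ≤ Mt) (hMr : 1 ≤ Mr)
    (b : ℝ) (hb : (Mt : ℝ) * Mr ≤ b)
    (P Q : ℝ) (r S E : ℕ → ℝ)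
    (hP : P = (Mt : ℝ) * Mr) (hQ : Q = (Mt : ℝ) + Mr - 1)
    -- `r i` is the multiplexing gain of layer `i+1`: `r_{i+1} = P/(nP + Q)`
    (hr : ∀ i, r i = P / (n * P + Q))
    (hS : ∀ i, S i = ∑ j ∈ Finset.range i, r j)
    -- `E i = P(1 - S_i) - Q r_{i+1} + b S_i` for `i < n`, and `E n = b S_n`
    (hE : ∀ i, E i = if i = n then b * S n else P * (1 - S i) - Q * r i + b * S i) :
    S n < 1 ∧ (∀ i ≤ n, E 0 ≤ E i) ∧
    E 0 = n * P ^ 2 / (n * P + Q) := by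
  have hMt' : (1 : ℝ) ≤ Mt := by exact_mod_cast hMt
  have hMr' : (1 : ℝ) ≤ Mr := by exact_mod_cast hMr
  have hPpos : 0 < P := by rw [hP]; positivity
  have hQpos : 0 < Q := by rw [hQ]; linarith
  have hD : 0 < (n : ℝ) * P + Q := by positivity
  set ρ := P / (n * P + Q) with hρ_def
  have hρ : (n * P + Q) * ρ = P := mul_div_cancel₀ P hD.ne'
  have hSi (i : ℕ) : S i = i * ρ := by simp [hS, hr]
  have hEi (i : ℕ) : E i = n * P * ρ + (b - P) * (i * ρ) := by
    rw [hE, hSi, hSi, hr, exponent_eq_of_equal_gains b i hρ]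
  have hE0 : E 0 = n * P * ρ := by simp [hEi]
  refine ⟨?_, fun i _ => ?_, ?_⟩
  · rw [hSi]
    exact nat_mul_lt_one_of_equal_gains hρ hPpos (mul_pos hQpos (div_pos hPpos hD))
  · rw [hE0, hEi]
    have : 0 ≤ (b - P) * (i * ρ) := mul_nonneg (by linarith) (by positivity)
    linarith
  · rw [hE0, hρ_def]
    ring

/-- The equal multiplexing-gain allocation `r_i = P/(nP + Q)` for `n`-layer BS
over a single-block `M_t × M_r` MIMO channel at bandwidth ratio `b ≥ M_t M_r`
satisfies `S_n < 1` and achieves `min_{0 ≤ i ≤ n} E_i = E_0 = nP²/(nP + Q)`. -/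
theorem stmt_13 (Mt Mr n : ℕ) (hMt : 1 ≤ Mt) (hMr : 1 ≤ Mr) (hn : 1 ≤ n)
    (b : ℝ) (hb : (Mt : ℝ) * Mr ≤ b)
    (P Q : ℝ) (r S E : ℕ → ℝ)
    (hP : P = (Mt : ℝ) * Mr) (hQ : Q = (Mt : ℝ) + Mr - 1)
    -- `r i` is the multiplexing gain of layer `i+1`: `r_{i+1} = P/(nP + Q)`
    (hr : ∀ i, r i = P / (n * P + Q))
    (hS : ∀ i, S i = ∑ j ∈ Finset.range i, r j)
    -- `E i = P(1 - S_i) - Q r_{i+1} + b S_i` for `i < n`, and `E n = b S_n`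
    (hE : ∀ i, E i = if i = n then b * S n else P * (1 - S i) - Q * r i + b * S i) :
    S n < 1 ∧ (∀ i ≤ n, E 0 ≤ E i) ∧
    E 0 = n * P ^ 2 / (n * P + Q) :=
  stmt_13_general Mt Mr n hMt hMr b hb P Q r S E hP hQ hr hS hE
end

section
/- Let L ≥ 1 and m ≥ 1 be integers, a ≥ 0 an integer, and let s, r be real numbers with r > 0 and L·r ≤ s. Write (x)^+ = max(x, 0). Then the infimum over all families α = (α_{j,i}) ∈ ℝ^{L×m} satisfying α_{j,1} ≥ α_{j,2} ≥ ⋯ ≥ α_{j,m} ≥ 0 for each j = 1, …, L and Σ_{j=1}^L Σ_{i=1}^m [ (s − α_{j,i})^+ − (s − L·r − α_{j,i})^+ ] < L·r, of the quantity Σ_{j=1}^L Σ_{i=1}^m (a + 2i − 1)·α_{j,i}, equals L·[ (m·a + m²)·s − (a + 2m − 1)·r ]. -/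
/-!
Put `g(x) = (s - x)⁺ - (s - L r - x)⁺`, which is `s - x` clamped to `[0, L r]`. The values
`g(α_{j,i})` are nonnegative with sum below `L r`, so each is below `L r`, and then
`α_{j,i} ≥ s - g(α_{j,i})`. As the weights `a + 2i - 1` lie in `[0, a + 2m - 1]`, summing
gives `Σ (a + 2i - 1) α_{j,i} ≥ L (m a + m²) s - (a + 2m - 1) Σ g(α_{j,i})`, which exceeds
the bound. Conversely, lowering only the heaviest entry `α_{j,m}` of each block from `s` to
`s - δ`, `0 ≤ δ < r`, is admissible and has cost `L[(m a + m²) s - (a + 2m - 1) δ]`, which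
tends to the bound as `δ → r`.
-/

open Finset

def clippedGap (s T x : ℝ) : ℝ := max (s - x) 0 - max (s - T - x) 0

lemma clippedGap_nonneg {T : ℝ} (hT : 0 ≤ T) (s x : ℝ) : 0 ≤ clippedGap s T x :=
  sub_nonneg.2 (max_le_max (by linarith) le_rfl)

lemma sub_clippedGap_le {s T x : ℝ} (h : clippedGap s T x < T) : s - clippedGap s T x ≤ x := by
  unfold clippedGap at *
  rcases le_total (s - T - x) 0 with hx | hx
  · rw [max_eq_right hx]
    linarith [le_max_left (s - x) 0]
  · rw [max_eq_left hx] at h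
    linarith [le_max_left (s - x) 0]

lemma clippedGap_sub {s T u : ℝ} (hu : 0 ≤ u) (huT : u ≤ T) : clippedGap s T (s - u) = u := by
  rw [clippedGap, max_eq_left (by linarith), max_eq_right (by linarith)]
  ring

theorem sum_mul_sub_le_of_sum_clippedGap_lt {ι : Type*} [Fintype ι] {c x : ι → ℝ}
    {s T C : ℝ} (hc : ∀ k, 0 ≤ c k) (hcC : ∀ k, c k ≤ C) (hC : 0 ≤ C) (hT : 0 ≤ T)
    (hgap : ∑ k, clippedGap s T (x k) < T) :
    (∑ k, c k) * s - C * T ≤ ∑ k, c k * x k := by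
  have hlt (k : ι) : clippedGap s T (x k) < T :=
    (single_le_sum (fun k _ => clippedGap_nonneg hT s (x k)) (mem_univ k)).trans_lt hgap
  have hterm (k : ι) : c k * s - C * clippedGap s T (x k) ≤ c k * x k := calc
    c k * s - C * clippedGap s T (x k) ≤ c k * (s - clippedGap s T (x k)) := by
      nlinarith [hcC k, clippedGap_nonneg hT s (x k)]
    _ ≤ c k * x k := mul_le_mul_of_nonneg_left (sub_clippedGap_le (hlt k)) (hc k)
  calc (∑ k, c k) * s - C * T ≤ ∑ k, (c k * s - C * clippedGap s T (x k)) := by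
        rw [sum_sub_distrib, ← sum_mul, ← mul_sum]
        gcongr
    _ ≤ ∑ k, c k * x k := sum_le_sum fun k _ => hterm k

theorem card_mul_sum_mul_sub_le_of_sum_sum_clippedGap_lt {ι κ : Type*} [Fintype ι] [Fintype κ]
    {c : κ → ℝ} {α : ι → κ → ℝ} {s T C : ℝ}
    (hc : ∀ i, 0 ≤ c i) (hcC : ∀ i, c i ≤ C) (hC : 0 ≤ C) (hT : 0 ≤ T)
    (hgap : ∑ j, ∑ i, clippedGap s T (α j i) < T) :
    Fintype.card ι * (∑ i, c i) * s - C * T ≤ ∑ j, ∑ i, c i * α j i := by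
  have := sum_mul_sub_le_of_sum_clippedGap_lt (ι := ι × κ) (c := fun p => c p.2)
    (x := fun p => α p.1 p.2) (fun p => hc p.2) (fun p => hcC p.2) hC hT
    (by simpa only [Fintype.sum_prod_type] using hgap)
  simpa only [Fintype.sum_prod_type, sum_const, card_univ, nsmul_eq_mul, mul_assoc] using this

lemma sum_fin_add_two_mul_add_one (a : ℝ) (m : ℕ) :
    ∑ i : Fin m, (a + 2 * (i : ℝ) + 1) = m * a + m ^ 2 := by
  induction m with
  | zero => simp
  | succ n ih =>
    rw [Fin.sum_univ_castSucc]
    simp only [Fin.val_castSucc, Fin.val_last, ih]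
    push_cast
    ring

lemma add_two_mul_val_add_one_le {m : ℕ} (a : ℝ) (i : Fin m) :
    a + 2 * (i : ℕ) + 1 ≤ a + 2 * m - 1 := by
  have : ((i : ℕ) : ℝ) + 1 ≤ m := by exact_mod_cast i.isLt
  linarith

section DropAt

variable {ι : Type*} [Fintype ι] [DecidableEq ι] (k : ι) (s : ℝ) {δ : ℝ}

lemma sum_mul_ite_eq_sub (c : ι → ℝ) :
    ∑ i, c i * (if i = k then s - δ else s) = (∑ i, c i) * s - c k * δ := by
  have (i : ι) :
      c i * (if i = k then s - δ else s) = c i * s - if i = k then c k * δ else 0 := by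
    split_ifs with h <;> simp [h, mul_sub]
  simp [this, sum_sub_distrib, sum_mul]

lemma sum_clippedGap_ite {T : ℝ} (hδ : 0 ≤ δ) (hδT : δ ≤ T) :
    ∑ i, clippedGap s T (if i = k then s - δ else s) = δ := by
  have (i : ι) : clippedGap s T (if i = k then s - δ else s) = if i = k then δ else 0 := by
    split_ifs
    · exact clippedGap_sub hδ hδT
    · simpa using clippedGap_sub (s := s) le_rfl (hδ.trans hδT)
  simp [this]

end DropAt

lemma antitone_ite_eq_last {n : ℕ} {s δ : ℝ} (hδ : 0 ≤ δ) :
    Antitone fun i : Fin (n + 1) => if i = Fin.last n then s - δ else s := by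
  intro i i' hii'
  by_cases hi : i = Fin.last n
  · simp [hi ▸ hii' |> Fin.last_le_iff.1, hi]
  · simp only [hi, if_false]
    split_ifs <;> linarith

/-- The optimization underlying the successive decoding diversity gain of the
broadcast strategy over an `L`-block MIMO channel: for `r > 0` with
`L·r ≤ s`, the infimum of `Σ_{j=1}^L Σ_{i=1}^m (a + 2i - 1) α_{j,i}` over
families `α` that are nonincreasing and nonnegative in `i` for each block `j`
and satisfy `Σ_j Σ_i [(s - α_{j,i})^+ - (s - Lr - α_{j,i})^+] < Lr` equals
`L[(ma + m²)s - (a + 2m - 1)r]`. -/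
theorem stmt_16 (L m : ℕ) (hL : 1 ≤ L) (hm : 1 ≤ m) (a : ℕ) (s r : ℝ)
    (hr : 0 < r) (hrs : (L : ℝ) * r ≤ s) :
    IsGLB
      { y : ℝ | ∃ α : Fin L → Fin m → ℝ,
          (∀ j, ∀ i i' : Fin m, i ≤ i' → α j i' ≤ α j i) ∧
          (∀ j i, 0 ≤ α j i) ∧
          (∑ j : Fin L, ∑ i : Fin m,
            (max (s - α j i) 0 - max (s - (L : ℝ) * r - α j i) 0)) < (L : ℝ) * r ∧
          y = ∑ j : Fin L, ∑ i : Fin m,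
            ((a : ℝ) + 2 * ((i : ℕ) : ℝ) + 1) * α j i }
      ((L : ℝ) * (((m : ℝ) * a + (m : ℝ) ^ 2) * s - ((a : ℝ) + 2 * m - 1) * r)) := by
  obtain ⟨n, rfl⟩ := Nat.exists_eq_add_of_le' hm
  have hL1 : (1 : ℝ) ≤ L := by exact_mod_cast hL
  have hweights := sum_fin_add_two_mul_add_one a (n + 1)
  set A : ℝ := ((n + 1 : ℕ) : ℝ) * a + ((n + 1 : ℕ) : ℝ) ^ 2
  set C : ℝ := a + 2 * ((n + 1 : ℕ) : ℝ) - 1 with hCdef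
  have hcC := add_two_mul_val_add_one_le (m := n + 1) a
  have hC : 0 < C := by linarith [hcC 0, a.cast_nonneg (α := ℝ)]
  refine (isGLB_Ioc (b := L * A * s) ?_).of_subset_of_superset isGLB_Ici ?_ ?_
  · nlinarith [mul_pos (mul_pos (one_pos.trans_le hL1) hC) hr]
  · rintro y ⟨hvy, hyw⟩
    obtain ⟨δ, hδ, hδr, rfl⟩ : ∃ δ, 0 ≤ δ ∧ δ < r ∧ y = L * (A * s - C * δ) :=
      ⟨(L * A * s - y) / (L * C), div_nonneg (by linarith) (by positivity),
        by rw [div_lt_iff₀ (by positivity)]; linarith, by field_simp; ring⟩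
    refine ⟨fun _ i => if i = Fin.last n then s - δ else s, fun _ => antitone_ite_eq_last hδ,
      fun _ i => by dsimp only; split_ifs <;> nlinarith, ?_, ?_⟩
    · have hgap := sum_clippedGap_ite (Fin.last n) s hδ
        (hδr.le.trans (le_mul_of_one_le_left hr.le hL1))
      unfold clippedGap at hgap
      simp only [hgap, sum_const, card_univ, Fintype.card_fin, nsmul_eq_mul]
      exact mul_lt_mul_of_pos_left hδr (one_pos.trans_le hL1)
    · simp only [sum_mul_ite_eq_sub, hweights, sum_const, card_univ, Fintype.card_fin,
        nsmul_eq_mul, Fin.val_last, hCdef]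
      push_cast
      ring
  · rintro y ⟨α, -, -, hgap, rfl⟩
    have := card_mul_sum_mul_sub_le_of_sum_sum_clippedGap_lt
      (c := fun i : Fin (n + 1) => (a : ℝ) + 2 * (i : ℕ) + 1) (α := α)
      (fun i => by positivity) hcC hC.le (by positivity) hgap
    rw [Fintype.card_fin, hweights] at this
    rw [Set.mem_Ici]
    linarith
end

section
/- Let M_t ≥ 1, M_r ≥ 1, L ≥ 1 be integers and b > 0 real. Set P = M_t·M_r and Q = M_t + M_r − 1. For each integer n ≥ 1 and each r ∈ ℝ^n with r_i ≥ 0 and Σ_{i=1}^n r_i ≤ 1/L, let S_i = Σ_{j=1}^i r_j and define E_i(r) = L·[P·(1 − L·S_i) − Q·r_{i+1}] + b·S_i for i = 0, 1, …, n−1 and E_n(r) = b·S_n. Define Δ_n = sup over all such r of min_{0 ≤ i ≤ n} E_i(r). Then lim_{n→∞} Δ_n = min(b/L, L·P); that is, the infinite-layer BS distortion exponent over the L-block channel equals b/L when b < L²·M_t·M_r and equals L·M_t·M_r when b ≥ L²·M_t·M_r. -/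
open Filter Finset

/-!
Every admissible rate vector is capped twice: the last exponent is `b·S_n ≤ b/L`, and the first
is `L(P - Q r_1) ≤ L P`. Conversely, `n` equal layers `r_i = 1/(Ln)` make the `i`-th exponent the
convex combination `(i/n)·(b/L) + (1 - i/n)·(L P)` minus `Q/n`, so `Δ_n ≥ min(b/L, L P) - Q/n`.
-/

def layerTerm (L P Q b : ℝ) (n : ℕ) (r : ℕ → ℝ) (i : ℕ) : ℝ :=
  if i = n then b * ∑ j ∈ range n, r j
  else L * (P * (1 - L * ∑ j ∈ range i, r j) - Q * r i) + b * ∑ j ∈ range i, r j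

def layerExponent (L P Q b : ℝ) (n : ℕ) (r : ℕ → ℝ) : ℝ :=
  (range (n + 1)).inf' nonempty_range_add_one (layerTerm L P Q b n r)

def achievableExponents (L P Q b : ℝ) (n : ℕ) : Set ℝ :=
  { v | ∃ r : ℕ → ℝ, (∀ i, 0 ≤ r i) ∧ ∑ i ∈ range n, r i ≤ 1 / L ∧
    v = layerExponent L P Q b n r }

section

variable {L P Q b : ℝ} {n : ℕ} {r : ℕ → ℝ}

lemma layerExponent_le_div (hb : 0 ≤ b) (hsum : ∑ i ∈ range n, r i ≤ 1 / L) :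
    layerExponent L P Q b n r ≤ b / L := by
  calc layerExponent L P Q b n r ≤ layerTerm L P Q b n r n :=
        inf'_le _ (self_mem_range_succ n)
    _ = b * ∑ i ∈ range n, r i := if_pos rfl
    _ ≤ b * (1 / L) := mul_le_mul_of_nonneg_left hsum hb
    _ = b / L := mul_one_div b L

lemma layerExponent_le_mul (hL : 0 ≤ L) (hP : 0 ≤ P) (hQ : 0 ≤ Q) (hr : 0 ≤ r 0) :
    layerExponent L P Q b n r ≤ L * P := by
  refine (inf'_le _ (mem_range.2 n.succ_pos)).trans ?_
  rcases n.eq_zero_or_pos with rfl | hn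
  · simpa [layerTerm] using mul_nonneg hL hP
  · simp only [layerTerm, if_neg hn.ne, range_zero, sum_empty]
    nlinarith [mul_nonneg hL (mul_nonneg hQ hr)]

lemma layerExponent_le_min (hL : 0 ≤ L) (hP : 0 ≤ P) (hQ : 0 ≤ Q) (hb : 0 ≤ b)
    (hr : ∀ i, 0 ≤ r i) (hsum : ∑ i ∈ range n, r i ≤ 1 / L) :
    layerExponent L P Q b n r ≤ min (b / L) (L * P) :=
  le_min (layerExponent_le_div hb hsum) (layerExponent_le_mul hL hP hQ (hr 0))

lemma sum_equal_layers (hn : (n : ℝ) ≠ 0) : ∑ _i ∈ range n, 1 / (L * n) = 1 / L := by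
  rw [sum_const, card_range, nsmul_eq_mul]
  field_simp

lemma layerTerm_equal_layers (hL : L ≠ 0) (hn : (n : ℝ) ≠ 0) {i : ℕ} (hi : i ≠ n) :
    layerTerm L P Q b n (fun _ => 1 / (L * n)) i
      = (i / n : ℝ) • (b / L) + (1 - i / n : ℝ) • (L * P) - Q / n := by
  simp only [layerTerm, if_neg hi, sum_const, card_range, nsmul_eq_mul, smul_eq_mul]
  field_simp
  ring

lemma min_sub_le_layerExponent_equal_layers (hL : 0 < L) (hn : 0 < n) (hQ : 0 ≤ Q) :
    min (b / L) (L * P) - Q / n ≤ layerExponent L P Q b n (fun _ => 1 / (L * n)) := by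
  have hn' : (0 : ℝ) < n := Nat.cast_pos.2 hn
  refine le_inf' _ _ fun i hi => ?_
  by_cases hin : i = n
  · rw [layerTerm, if_pos hin, sum_equal_layers hn'.ne', mul_one_div]
    linarith [min_le_left (b / L) (L * P), div_nonneg hQ hn'.le]
  · rw [layerTerm_equal_layers hL.ne' hn'.ne' hin]
    have hi_le : (i : ℝ) ≤ n := Nat.cast_le.2 (Nat.lt_succ_iff.1 (mem_range.1 hi))
    have := Convex.min_le_combo (b / L) (L * P) (div_nonneg i.cast_nonneg hn'.le)
      (sub_nonneg.2 ((div_le_one hn').2 hi_le)) (add_sub_cancel _ _)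
    linarith

lemma sSup_achievableExponents_le (hL : 0 ≤ L) (hP : 0 ≤ P) (hQ : 0 ≤ Q) (hb : 0 ≤ b) :
    sSup (achievableExponents L P Q b n) ≤ min (b / L) (L * P) := by
  refine csSup_le ⟨_, fun _ => 0, fun _ => le_rfl, ?_, rfl⟩ ?_
  · simpa using hL
  · rintro v ⟨r, hr, hsum, rfl⟩
    exact layerExponent_le_min hL hP hQ hb hr hsum

lemma min_sub_le_sSup_achievableExponents (hL : 0 < L) (hP : 0 ≤ P) (hQ : 0 ≤ Q) (hb : 0 ≤ b)
    (hn : 0 < n) :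
    min (b / L) (L * P) - Q / n ≤ sSup (achievableExponents L P Q b n) := by
  have hbdd : BddAbove (achievableExponents L P Q b n) := by
    refine ⟨min (b / L) (L * P), ?_⟩
    rintro v ⟨r, hr, hsum, rfl⟩
    exact layerExponent_le_min hL.le hP hQ hb hr hsum
  have hmem : layerExponent L P Q b n (fun _ => 1 / (L * n)) ∈ achievableExponents L P Q b n :=
    ⟨_, fun _ => by positivity, (sum_equal_layers (Nat.cast_ne_zero.2 hn.ne')).le, rfl⟩
  exact (min_sub_le_layerExponent_equal_layers hL hn hQ).trans (le_csSup hbdd hmem)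

theorem tendsto_sSup_achievableExponents (hL : 0 < L) (hP : 0 ≤ P) (hQ : 0 ≤ Q) (hb : 0 ≤ b) :
    Tendsto (fun n => sSup (achievableExponents L P Q b n)) atTop
      (nhds (min (b / L) (L * P))) := by
  have hlower : Tendsto (fun n : ℕ => min (b / L) (L * P) - Q / n) atTop
      (nhds (min (b / L) (L * P))) := by
    simpa using tendsto_const_nhds.sub (tendsto_const_div_atTop_nhds_zero_nat Q)
  refine tendsto_of_tendsto_of_tendsto_of_le_of_le' hlower tendsto_const_nhds ?_ ?_
  · filter_upwards [eventually_gt_atTop 0] with n hn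
    exact min_sub_le_sSup_achievableExponents hL hP hQ hb hn
  · exact Eventually.of_forall fun n => sSup_achievableExponents_le hL.le hP hQ hb

end

/-- The infinite-layer BS distortion exponent over an `L`-block `M_t × M_r`
MIMO channel at bandwidth ratio `b` equals `min(b/L, L·M_t·M_r)`: that is,
`b/L` when `b < L² M_t M_r` and `L M_t M_r` when `b ≥ L² M_t M_r`. -/
theorem stmt_17 (Mt Mr L : ℕ) (hMt : 1 ≤ Mt) (hL : 1 ≤ L)
    (b : ℝ) (hb : 0 < b) (Δ : ℕ → ℝ)
    (hΔ : ∀ n, Δ n = sSup { v : ℝ | ∃ r : ℕ → ℝ, (∀ i, 0 ≤ r i) ∧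
        (∑ i ∈ Finset.range n, r i) ≤ 1 / L ∧
        -- `E i = L[P(1 - L·S_i) - Q·r_{i+1}] + b·S_i` for `i < n`, `E n = b·S_n`,
        -- with `P = M_t M_r`, `Q = M_t + M_r - 1`, `S_i = r_1 + ⋯ + r_i`
        v = (Finset.range (n + 1)).inf' ⟨n, by simp⟩ (fun i =>
          if i = n then b * ∑ j ∈ Finset.range n, r j
          else (L : ℝ) * ((Mt : ℝ) * Mr * (1 - L * ∑ j ∈ Finset.range i, r j)
              - ((Mt : ℝ) + Mr - 1) * r i)
            + b * ∑ j ∈ Finset.range i, r j) }) :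
    Tendsto Δ atTop (nhds (min (b / L) ((L : ℝ) * Mt * Mr))) := by
  have hΔ' : Δ = fun n => sSup (achievableExponents L (Mt * Mr) (Mt + Mr - 1) b n) :=
    funext hΔ
  have hQ : (0 : ℝ) ≤ Mt + Mr - 1 := by
    have : (1 : ℝ) ≤ Mt := Nat.one_le_cast.2 hMt
    linarith [Mr.cast_nonneg (α := ℝ)]
  rw [hΔ', mul_assoc]
  exact tendsto_sSup_achievableExponents (by exact_mod_cast hL) (by positivity) hQ hb.le
end
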